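/- arXiv:0712.1103 — 5 statements merged into one kernel-verified Lean document; each statement's English description precedes it below -/
import Mathlib

section
/- Let α₀ := inf_{s>0} F(s)/(s²/2). Then α₀ is equal to the infimum, taken over all u ∈ H¹(ℝᴺ,ℝ) with u ≥ 0 almost everywhere, u not almost everywhere zero, and F∘u ∈ L¹(ℝᴺ), of the quantity α(u) := (∫_{ℝᴺ} (½|∇u|² + F(u)) dx) / (½ ∫_{ℝᴺ} u² dx). -/
open MeasureTheory

set_option maxHeartbeats 1000000

noncomputable section

/-- Distributional (weak) gradient: for every smooth compactly supported test
function `φ` and every coordinate `i`, `∫ u ∂ᵢφ = - ∫ gᵢ φ`. -/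
def HasWeakGradient {N : ℕ} (u : EuclideanSpace ℝ (Fin N) → ℝ)
    (g : EuclideanSpace ℝ (Fin N) → EuclideanSpace ℝ (Fin N)) : Prop :=
  ∀ φ : EuclideanSpace ℝ (Fin N) → ℝ, ContDiff ℝ (⊤ : ℕ∞) φ → HasCompactSupport φ →
    ∀ i : Fin N,
      ∫ x, u x * fderiv ℝ φ x (EuclideanSpace.single i 1) = - ∫ x, g x i * φ x

section Aux

open Metric Real Filter

lemma st_deriv_zero_neg {t : ℝ} (h : t < 0) : deriv Real.smoothTransition t = 0 := by
  have : Real.smoothTransition =ᶠ[nhds t] fun _ => (0:ℝ) :=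
    Filter.eventually_of_mem (Iio_mem_nhds h)
      (fun y hy => Real.smoothTransition.zero_of_nonpos hy.le)
  rw [this.deriv_eq, deriv_const]

lemma st_deriv_zero_gt {t : ℝ} (h : 1 < t) : deriv Real.smoothTransition t = 0 := by
  have : Real.smoothTransition =ᶠ[nhds t] fun _ => (1:ℝ) :=
    Filter.eventually_of_mem (Ioi_mem_nhds h)
      (fun y hy => Real.smoothTransition.one_of_one_le hy.le)
  rw [this.deriv_eq, deriv_const]

lemma st_deriv_bound : ∃ K : ℝ, 1 ≤ K ∧ ∀ t : ℝ, |deriv Real.smoothTransition t| ≤ K := by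
  have hc : Continuous fun t => |deriv Real.smoothTransition t| :=
    ((Real.smoothTransition.contDiff (n := 2)).continuous_deriv one_le_two).abs
  obtain ⟨t0, -, ht0⟩ := isCompact_Icc.exists_isMaxOn (Set.nonempty_Icc.2 zero_le_one)
    hc.continuousOn
  refine ⟨max 1 (|deriv Real.smoothTransition t0|), le_max_left _ _, fun t => ?_⟩
  rcases lt_or_ge t 0 with h | h
  · rw [st_deriv_zero_neg h]; simp
  rcases le_or_gt t 1 with h1 | h1
  · exact le_max_of_le_right (ht0 ⟨h, h1⟩)
  · rw [st_deriv_zero_gt h1]; simp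

variable {N : ℕ}

local notation "E" => EuclideanSpace ℝ (Fin N)

lemma euclidean_vol_ball (hN : 1 ≤ N) (r : ℝ) (hr : 0 ≤ r) :
    (volume (ball (0 : E) r)).toReal
      = r ^ N * (volume (ball (0 : E) 1)).toReal := by
  haveI : Nonempty (Fin N) := ⟨⟨0, hN⟩⟩
  rw [Measure.addHaar_ball _ _ hr]
  rw [ENNReal.toReal_mul, ENNReal.toReal_ofReal (by positivity)]
  simp [finrank_euclideanSpace]

/-- The key construction: truncated constants give energy ratio close to `F s / (s²/2)`. -/
lemma approx (hN : 1 ≤ N) (F : ℝ → ℝ) (hFc : Continuous F) (hF0 : F 0 = 0)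
    (hH2 : ∀ s : ℝ, 0 ≤ s → 0 ≤ F s) (s : ℝ) (hs : 0 < s) (ε : ℝ) (hε : 0 < ε) :
    ∃ (u : E → ℝ) (g : E → E),
      MemLp u 2 volume ∧ HasWeakGradient u g ∧ MemLp g 2 volume ∧
      (∀ᵐ x : E ∂volume, 0 ≤ u x) ∧
      ¬ (u =ᵐ[volume] (fun _ => (0:ℝ))) ∧
      Integrable (fun x => F (u x)) volume ∧
      (∫ x, ((1:ℝ)/2 * ‖g x‖ ^ 2 + F (u x))) / ((1:ℝ)/2 * ∫ x, (u x) ^ 2)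
        ≤ F s / (s ^ 2 / 2) + ε := by
  classical
  haveI : Nonempty (Fin N) := ⟨⟨0, hN⟩⟩
  obtain ⟨K, hK1, hK⟩ := st_deriv_bound
  -- bound for F on [0, s]
  obtain ⟨t0, -, ht0⟩ := isCompact_Icc.exists_isMaxOn (Set.nonempty_Icc.2 hs.le)
    hFc.continuousOn
  set MF : ℝ := max (F t0) 0 with hMFdef
  have hMF : ∀ t ∈ Set.Icc (0:ℝ) s, F t ≤ MF := fun t ht => (ht0 ht).trans (le_max_left _ _)
  set C : ℝ := (2*s*K)^2/2 + MF + 1 with hCdef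
  have hC : 0 < C := by
    have : 0 ≤ MF := le_max_right _ _
    positivity
  set δ : ℝ := ε * (s^2/2) / C with hδdef
  have hδ : 0 < δ := by positivity
  -- choose R
  obtain ⟨R, hRδ, hR1⟩ : ∃ R : ℝ, (1 + R⁻¹)^N ≤ 1 + δ ∧ 1 ≤ R := by
    have h : Tendsto (fun R : ℝ => (1 + R⁻¹)^N) atTop (nhds ((1 + 0)^N)) :=
      (tendsto_const_nhds.add tendsto_inv_atTop_zero).pow N
    have h2 : ((1:ℝ)+0)^N < 1 + δ := by rw [add_zero, one_pow]; linarith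
    have := (h.eventually (eventually_le_nhds h2)).and (eventually_ge_atTop 1)
    exact this.exists.imp fun R hR => hR
  have hR0 : 0 < R := lt_of_lt_of_le one_pos hR1
  set c : ℝ := 1/(2*R+1) with hcdef
  have hc0 : 0 < c := by positivity
  set a : E → ℝ := fun x => c * (‖x‖^2 - R^2) with ha
  set u : E → ℝ := fun x => s * (1 - Real.smoothTransition (a x)) with hu
  set d : E → ℝ := fun x => -s * deriv Real.smoothTransition (a x) * c with hd
  set g : E → E := fun x => d x • ((2:ℝ) • x) with hg
  -- basic pointwise facts
  have h_a_lt : ∀ x : E, ‖x‖ < R → a x < 0 := by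
    intro x hx
    have : ‖x‖^2 < R^2 := by nlinarith [norm_nonneg x]
    have : ‖x‖^2 - R^2 < 0 := by linarith
    exact mul_neg_of_pos_of_neg hc0 this
  have h_a_ge : ∀ x : E, R + 1 ≤ ‖x‖ → 1 ≤ a x := by
    intro x hx
    have h2 : (R+1)^2 ≤ ‖x‖^2 := by nlinarith [norm_nonneg x]
    have : 2*R+1 ≤ ‖x‖^2 - R^2 := by nlinarith
    have := (mul_le_mul_of_nonneg_left this hc0.le)
    calc (1:ℝ) = c * (2*R+1) := by rw [hcdef]; field_simp
    _ ≤ c * (‖x‖^2 - R^2) := this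
  have hu_ball : ∀ x : E, ‖x‖ < R → u x = s := by
    intro x hx
    simp [hu, Real.smoothTransition.zero_of_nonpos (h_a_lt x hx).le]
  have hg_ball : ∀ x : E, ‖x‖ < R → g x = 0 := by
    intro x hx
    simp [hg, hd, st_deriv_zero_neg (h_a_lt x hx)]
  have hu_out : ∀ x : E, R + 1 ≤ ‖x‖ → u x = 0 := by
    intro x hx
    simp [hu, Real.smoothTransition.one_of_one_le (h_a_ge x hx)]
  have hg_out : ∀ x : E, R + 1 < ‖x‖ → g x = 0 := by
    intro x hx
    have : 1 < a x := by
      have h2 : (R+1)^2 < ‖x‖^2 := by nlinarith [norm_nonneg x, hR0]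
      have : 2*R+1 < ‖x‖^2 - R^2 := by nlinarith
      calc (1:ℝ) = c * (2*R+1) := by rw [hcdef]; field_simp
      _ < c * (‖x‖^2 - R^2) := by exact mul_lt_mul_of_pos_left this hc0
    simp [hg, hd, st_deriv_zero_gt this]
  have hu_nonneg : ∀ x : E, 0 ≤ u x := fun x =>
    mul_nonneg hs.le (by linarith [Real.smoothTransition.le_one (a x)])
  have hu_le : ∀ x : E, u x ≤ s := by
    intro x
    have := Real.smoothTransition.nonneg (a x)
    calc u x = s * (1 - Real.smoothTransition (a x)) := rfl
    _ ≤ s * 1 := by nlinarith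
    _ = s := mul_one s
  have hgnorm : ∀ x : E, ‖g x‖ ≤ 2*s*K := by
    intro x
    rcases le_or_gt ‖x‖ (R+1) with hx | hx
    · have h1 : ‖g x‖ = |d x| * (2 * ‖x‖) := by
        rw [hg]
        simp [norm_smul, Real.norm_eq_abs]
      have h2 : |d x| ≤ s * K * c := by
        rw [hd]
        have := hK (a x)
        have hcabs : |(-s) * deriv Real.smoothTransition (a x) * c| = s * |deriv Real.smoothTransition (a x)| * c := by
          rw [abs_mul, abs_mul, abs_neg, abs_of_nonneg hs.le, abs_of_nonneg hc0.le]
        rw [hcabs]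
        have : s * |deriv Real.smoothTransition (a x)| ≤ s * K := by nlinarith
        nlinarith
      have h3 : c * (R+1) ≤ 1 := by
        rw [hcdef]
        rw [div_mul_eq_mul_div, one_mul, div_le_one (by linarith)]
        linarith
      calc ‖g x‖ = |d x| * (2 * ‖x‖) := h1
      _ ≤ (s * K * c) * (2 * (R+1)) := by
          apply mul_le_mul h2 (by nlinarith [norm_nonneg x]) (by positivity) (by positivity)
      _ = (2*s*K) * (c * (R+1)) := by ring
      _ ≤ (2*s*K) * 1 := mul_le_mul_of_nonneg_left h3 (by positivity)
      _ = 2*s*K := mul_one _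
    · rw [hg_out x hx, norm_zero]; positivity
  -- differentiability
  have hFdu : ∀ x : E, HasFDerivAt u ((d x • (2 • innerSL ℝ x) : E →L[ℝ] ℝ)) x := by
    intro x
    have h1 : HasFDerivAt (fun x : E => ‖x‖^2) (2 • innerSL ℝ x) x :=
      (hasFDerivAt_id x).norm_sq.congr_fderiv (by ext v; simp)
    have h2 : HasFDerivAt (fun x : E => c * (‖x‖^2 - R^2)) (c • (2 • innerSL ℝ x)) x :=
      ((h1.sub_const (R^2)).const_mul c)
    have h3 : HasDerivAt Real.smoothTransition (deriv Real.smoothTransition (a x)) (a x) :=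
      ((Real.smoothTransition.contDiff (n := 1)).differentiable one_ne_zero _).hasDerivAt
    have h4 := h3.comp_hasFDerivAt x h2
    have h5 := ((hasFDerivAt_const (1:ℝ) x).sub h4).const_mul s
    refine h5.congr_fderiv ?_
    ext v
    simp [hd]
    ring
  have hdiffu : Differentiable ℝ u := fun x => (hFdu x).differentiableAt
  have hfderiv_single : ∀ (x : E) (i : Fin N),
      fderiv ℝ u x (EuclideanSpace.single i 1) = g x i := by
    intro x i
    rw [(hFdu x).fderiv]
    simp [hg, EuclideanSpace.inner_single_right]
  -- continuity
  have hca : Continuous a := by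
    apply continuous_const.mul
    exact (continuous_norm.pow 2).sub continuous_const
  have hcu : Continuous u :=
    continuous_const.mul (continuous_const.sub (Real.smoothTransition.continuous.comp hca))
  have hcd : Continuous d := by
    apply Continuous.mul _ continuous_const
    exact continuous_const.mul
      (((Real.smoothTransition.contDiff (n := 2)).continuous_deriv one_le_two).comp hca)
  have hcg : Continuous g := hcd.smul (continuous_const_smul (2:ℝ))
  -- compact supports
  have hsupp_u : HasCompactSupport u := by
    apply HasCompactSupport.intro (isCompact_closedBall (0:E) (R+1))
    intro x hx
    have hxn : R + 1 < ‖x‖ := by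
      by_contra h
      exact hx (mem_closedBall.2 (by simpa [dist_zero_right] using not_lt.1 h))
    exact hu_out x hxn.le
  have hsupp_g : HasCompactSupport g := by
    apply HasCompactSupport.intro (isCompact_closedBall (0:E) (R+1))
    intro x hx
    apply hg_out
    by_contra h
    exact hx (mem_closedBall.2 (by simpa [dist_zero_right] using not_lt.1 h))
  have hsupp_Fu : HasCompactSupport (fun x => F (u x)) := by
    apply HasCompactSupport.intro (isCompact_closedBall (0:E) (R+1))
    intro x hx
    have : R + 1 ≤ ‖x‖ := by
      by_contra h
      exact hx (mem_closedBall.2 (by simpa [dist_zero_right] using (not_le.1 h).le))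
    rw [hu_out x this, hF0]
  -- integrability
  have hmu2 : MemLp u 2 volume := hcu.memLp_of_hasCompactSupport hsupp_u
  have hmg2 : MemLp g 2 volume := hcg.memLp_of_hasCompactSupport hsupp_g
  have hintFu : Integrable (fun x => F (u x)) volume :=
    (hFc.comp hcu).integrable_of_hasCompactSupport hsupp_Fu
  have hint_u2 : Integrable (fun x : E => (u x)^2) volume := hmu2.integrable_sq
  have hint_g2 : Integrable (fun x : E => ‖g x‖^2) volume := hmg2.norm.integrable_sq
  have hint_num : Integrable (fun x : E => (1:ℝ)/2 * ‖g x‖^2 + F (u x)) volume :=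
    (hint_g2.const_mul _).add hintFu
  -- weak gradient
  have hwg : HasWeakGradient u g := by
    intro φ hφ hφs i
    have hdφ : Differentiable ℝ φ := hφ.differentiable (by simp)
    have hcφ : Continuous φ := hφ.continuous
    have hcdφ : Continuous fun x => fderiv ℝ φ x (EuclideanSpace.single i 1) :=
      (hφ.continuous_fderiv (by simp)).clm_apply continuous_const
    have hcdu : Continuous fun x => fderiv ℝ u x (EuclideanSpace.single i 1) := by
      have : (fun x => fderiv ℝ u x (EuclideanSpace.single i 1)) = fun x => g x i := by
        funext x; exact hfderiv_single x i
      rw [this]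
      exact (EuclideanSpace.proj i : E →L[ℝ] ℝ).continuous.comp hcg
    have I1 : Integrable (fun x => fderiv ℝ u x (EuclideanSpace.single i 1) * φ x) volume := by
      apply Continuous.integrable_of_hasCompactSupport (hcdu.mul hcφ)
      exact (hφs.mul_left)
    have I2 : Integrable (fun x => u x * fderiv ℝ φ x (EuclideanSpace.single i 1)) volume := by
      apply Continuous.integrable_of_hasCompactSupport (hcu.mul hcdφ)
      exact (hsupp_u.mul_right)
    have I3 : Integrable (fun x => u x * φ x) volume := by
      apply Continuous.integrable_of_hasCompactSupport (hcu.mul hcφ)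
      exact (hsupp_u.mul_right)
    have h := integral_mul_fderiv_eq_neg_fderiv_mul_of_integrable I1 I2 I3 (fun x _ => hdiffu x) (fun x _ => hdφ x)
    rw [h]
    congr 1
    apply integral_congr_ae
    filter_upwards with x
    rw [hfderiv_single x i]
  -- volume facts
  set κ : ℝ := (volume (ball (0 : E) 1)).toReal with hκdef
  have hκ : 0 < κ := by
    rw [hκdef]
    refine ENNReal.toReal_pos (ne_of_gt (measure_ball_pos volume 0 one_pos)) ?_
    exact measure_ball_lt_top.ne
  have hvR : (volume (ball (0 : E) R)).toReal = R^N * κ := euclidean_vol_ball hN R hR0.le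
  have hvR1 : (volume (ball (0 : E) (R+1))).toReal = (R+1)^N * κ :=
    euclidean_vol_ball hN (R+1) (by linarith)
  -- denominator lower bound
  have hden : s^2 * (R^N * κ) ≤ ∫ x : E, (u x)^2 := by
    have hptd : ∀ x : E, Set.indicator (ball (0:E) R) (fun _ => s^2) x ≤ (u x)^2 := by
      intro x
      by_cases hx : x ∈ ball (0:E) R
      · rw [Set.indicator_of_mem hx]
        rw [hu_ball x (by simpa [dist_zero_right] using hx)]
      · rw [Set.indicator_of_notMem hx]
        positivity
    have hii : Integrable (Set.indicator (ball (0:E) R) (fun _ => s^2)) volume := by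
      rw [integrable_indicator_iff measurableSet_ball]
      exact integrableOn_const measure_ball_lt_top.ne
    calc s^2 * (R^N * κ) = ∫ x : E, Set.indicator (ball (0:E) R) (fun _ => s^2) x := by
          rw [integral_indicator_const _ measurableSet_ball, measureReal_def, hvR, smul_eq_mul]; ring
    _ ≤ ∫ x : E, (u x)^2 := integral_mono hii hint_u2 hptd
  have hdenpos : 0 < ∫ x : E, (u x)^2 :=
    lt_of_lt_of_le (by positivity) hden
  -- not a.e. zero
  have hnz : ¬ (u =ᵐ[volume] (fun _ => (0:ℝ))) := by
    intro h
    have : (fun x : E => (u x)^2) =ᵐ[volume] (fun _ => (0:ℝ)) := by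
      filter_upwards [h] with x hx
      simp [hx]
    rw [integral_congr_ae this, integral_zero] at hdenpos
    exact lt_irrefl 0 hdenpos
  -- numerator upper bound
  have hnum : (∫ x : E, ((1:ℝ)/2 * ‖g x‖^2 + F (u x)))
      ≤ F s * (R^N * κ) + C * ((R+1)^N * κ - R^N * κ) := by
    set ann : Set E := closedBall (0:E) (R+1) \ ball (0:E) R with hanndef
    have hannmeas : MeasurableSet ann := measurableSet_closedBall.diff measurableSet_ball
    have hptn : ∀ x : E, (1:ℝ)/2 * ‖g x‖^2 + F (u x)
        ≤ Set.indicator (ball (0:E) R) (fun _ => F s) x + Set.indicator ann (fun _ => C) x := by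
      intro x
      by_cases hx : x ∈ ball (0:E) R
      · have hxn : ‖x‖ < R := by simpa [dist_zero_right] using hx
        rw [Set.indicator_of_mem hx, Set.indicator_of_notMem (fun h => h.2 hx)]
        rw [hu_ball x hxn, hg_ball x hxn]
        simp
      · rcases le_or_gt ‖x‖ (R+1) with hx1 | hx1
        · have hxann : x ∈ ann := ⟨mem_closedBall.2 (by simpa [dist_zero_right] using hx1), hx⟩
          rw [Set.indicator_of_notMem hx, Set.indicator_of_mem hxann, zero_add]
          have h1 : (1:ℝ)/2 * ‖g x‖^2 ≤ (2*s*K)^2/2 := by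
            have h := hgnorm x
            nlinarith [norm_nonneg (g x)]
          have h2 : F (u x) ≤ MF := hMF (u x) ⟨hu_nonneg x, hu_le x⟩
          rw [hCdef]
          linarith
        · have hxann : x ∉ ann := fun h => absurd (mem_closedBall.1 h.1)
            (by simpa [dist_zero_right] using hx1.not_ge)
          rw [Set.indicator_of_notMem hx, Set.indicator_of_notMem hxann]
          rw [hu_out x hx1.le, hg_out x hx1, hF0]
          simp
    have hii1 : Integrable (Set.indicator (ball (0:E) R) (fun _ => F s)) volume := by
      rw [integrable_indicator_iff measurableSet_ball]
      exact integrableOn_const measure_ball_lt_top.ne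
    have hannfin : volume ann < ⊤ :=
      lt_of_le_of_lt (measure_mono Set.diff_subset) measure_closedBall_lt_top
    have hii2 : Integrable (Set.indicator ann (fun _ => C)) volume := by
      rw [integrable_indicator_iff hannmeas]
      exact integrableOn_const hannfin.ne
    have hannvol : (volume ann).toReal = (R+1)^N * κ - R^N * κ := by
      rw [hanndef, measure_diff (ball_subset_closedBall.trans (closedBall_subset_closedBall (by linarith)))
        measurableSet_ball.nullMeasurableSet measure_ball_lt_top.ne]
      rw [ENNReal.toReal_sub_of_le (measure_mono (ball_subset_closedBall.trans
        (closedBall_subset_closedBall (by linarith)))) measure_closedBall_lt_top.ne]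
      rw [Measure.addHaar_closedBall_eq_addHaar_ball, hvR1, hvR]
    calc (∫ x : E, ((1:ℝ)/2 * ‖g x‖^2 + F (u x)))
        ≤ ∫ x : E, (Set.indicator (ball (0:E) R) (fun _ => F s) x
            + Set.indicator ann (fun _ => C) x) := by
          exact integral_mono hint_num (hii1.add hii2) hptn
    _ = F s * (R^N * κ) + C * ((R+1)^N * κ - R^N * κ) := by
        rw [integral_add hii1 hii2, integral_indicator_const _ measurableSet_ball,
          integral_indicator_const _ hannmeas, measureReal_def, measureReal_def, hvR, hannvol, smul_eq_mul, smul_eq_mul]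
        ring
  -- ratio bound
  refine ⟨u, g, hmu2, hwg, hmg2, Filter.Eventually.of_forall hu_nonneg, hnz, hintFu, ?_⟩
  have hnumnn : 0 ≤ F s * (R^N * κ) + C * ((R+1)^N * κ - R^N * κ) := by
    have h1 : 0 ≤ F s := hH2 s hs.le
    have h2 : R^N ≤ (R+1)^N := pow_le_pow_left₀ hR0.le (by linarith) N
    have h3 : R^N * κ ≤ (R+1)^N * κ := by nlinarith
    have h4 : 0 ≤ F s * (R^N * κ) := mul_nonneg h1 (by positivity)
    have h5 : 0 ≤ C * ((R+1)^N * κ - R^N * κ) := mul_nonneg hC.le (by linarith)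
    linarith
  have hstep1 : (∫ x : E, ((1:ℝ)/2 * ‖g x‖^2 + F (u x))) / ((1:ℝ)/2 * ∫ x : E, (u x)^2)
      ≤ (F s * (R^N * κ) + C * ((R+1)^N * κ - R^N * κ)) / ((1:ℝ)/2 * (s^2 * (R^N * κ))) := by
    apply div_le_div₀ hnumnn hnum (by positivity)
    nlinarith
  refine hstep1.trans ?_
  -- now pure algebra
  have hRpow : (R+1)^N = R^N * (1+R⁻¹)^N := by
    rw [← mul_pow]
    congr 1
    field_simp
  have hRNpos : 0 < R^N := pow_pos hR0 N
  have key : (F s * (R^N * κ) + C * ((R+1)^N * κ - R^N * κ)) / ((1:ℝ)/2 * (s^2 * (R^N * κ)))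
      = (F s + C * ((1+R⁻¹)^N - 1)) / (s^2/2) := by
    rw [hRpow]
    field_simp
  rw [key]
  have h1 : C * ((1+R⁻¹)^N - 1) ≤ ε * (s^2/2) := by
    have h2 : (1+R⁻¹)^N - 1 ≤ δ := by linarith
    calc C * ((1+R⁻¹)^N - 1) ≤ C * δ := mul_le_mul_of_nonneg_left h2 hC.le
    _ = ε * (s^2/2) := by rw [hδdef, mul_comm, div_mul_cancel₀ _ hC.ne']
  calc (F s + C*((1+R⁻¹)^N - 1))/(s^2/2) ≤ (F s + ε*(s^2/2))/(s^2/2) := by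
        gcongr
  _ = F s/(s^2/2) + ε := by
      rw [add_div, mul_div_assoc, div_self (by positivity : (s^2/2) ≠ 0), mul_one]

end Aux

section Lower

open Metric

variable {N : ℕ}

local notation "E" => EuclideanSpace ℝ (Fin N)

lemma lower_bound (F : ℝ → ℝ) (hF0 : F 0 = 0) (hH2 : ∀ s : ℝ, 0 ≤ s → 0 ≤ F s)
    (u : E → ℝ) (g : E → E) (hu : MemLp u 2 volume) (hg : MemLp g 2 volume)
    (hpos : ∀ᵐ x : E ∂volume, 0 ≤ u x) (hnz : ¬ (u =ᵐ[volume] (fun _ => (0:ℝ))))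
    (hFu : Integrable (fun x => F (u x)) volume) :
    sInf {r : ℝ | ∃ s : ℝ, 0 < s ∧ r = F s / (s ^ 2 / 2)}
      ≤ (∫ x, ((1:ℝ)/2 * ‖g x‖ ^ 2 + F (u x))) / ((1:ℝ)/2 * ∫ x, (u x) ^ 2) := by
  set A : Set ℝ := {r : ℝ | ∃ s : ℝ, 0 < s ∧ r = F s / (s ^ 2 / 2)} with hA
  set α0 : ℝ := sInf A with hα0
  have hAbdd : BddBelow A := by
    refine ⟨0, fun r hr => ?_⟩
    obtain ⟨s, hs, rfl⟩ := hr
    have := hH2 s hs.le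
    positivity
  -- pointwise bound a.e.
  have hpt : ∀ᵐ x : E ∂volume, α0 * ((u x)^2/2) ≤ F (u x) := by
    filter_upwards [hpos] with x hx
    rcases eq_or_lt_of_le hx with h | h
    · rw [← h, hF0]
      simp
    · have hmem : F (u x) / ((u x)^2/2) ∈ A := ⟨u x, h, rfl⟩
      have h1 : α0 ≤ F (u x) / ((u x)^2/2) := csInf_le hAbdd hmem
      have h2 : 0 < (u x)^2/2 := by positivity
      calc α0 * ((u x)^2/2) ≤ (F (u x) / ((u x)^2/2)) * ((u x)^2/2) :=
            mul_le_mul_of_nonneg_right h1 h2.le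
      _ = F (u x) := div_mul_cancel₀ _ h2.ne'
  have hint_u2 : Integrable (fun x : E => (u x)^2) volume := hu.integrable_sq
  have hint_g2 : Integrable (fun x : E => ‖g x‖^2) volume := hg.norm.integrable_sq
  have hint_num : Integrable (fun x : E => (1:ℝ)/2 * ‖g x‖^2 + F (u x)) volume :=
    (hint_g2.const_mul _).add hFu
  -- denominator positive
  have hden_nonneg : 0 ≤ ∫ x : E, (u x)^2 := integral_nonneg fun x => sq_nonneg _
  have hdenpos : 0 < ∫ x : E, (u x)^2 := by
    rcases eq_or_lt_of_le hden_nonneg with h | h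
    · exfalso
      have h0 : (fun x : E => (u x)^2) =ᵐ[volume] 0 :=
        (integral_eq_zero_iff_of_nonneg_ae (Filter.Eventually.of_forall fun x => sq_nonneg _)
          hint_u2).1 h.symm
      apply hnz
      filter_upwards [h0] with x hx
      have : (u x)^2 = 0 := hx
      exact pow_eq_zero_iff (n := 2) (by norm_num) |>.1 this
    · exact h
  -- integral comparison
  have h1 : α0 * ((1:ℝ)/2 * ∫ x : E, (u x)^2) ≤ ∫ x : E, F (u x) := by
    have heq : α0 * ((1:ℝ)/2 * ∫ x : E, (u x)^2) = ∫ x : E, α0 * ((u x)^2/2) := by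
      rw [integral_const_mul]
      rw [show (fun x : E => (u x)^2/2) = fun x : E => (2:ℝ)⁻¹ * (u x)^2 by
        funext x; ring]
      rw [integral_const_mul]
      ring
    rw [heq]
    exact integral_mono_ae ((hint_u2.const_mul _).div_const 2 |>.congr
      (Filter.Eventually.of_forall fun x => by ring)) hFu hpt
  have h2 : (∫ x : E, F (u x)) ≤ ∫ x : E, ((1:ℝ)/2 * ‖g x‖^2 + F (u x)) := by
    apply integral_mono hFu hint_num
    intro x
    have : 0 ≤ (1:ℝ)/2 * ‖g x‖^2 := by positivity
    simp only []
    linarith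
  rw [le_div_iff₀ (by positivity)]
  exact h1.trans h2

end Lower

/-- Under (H0) and (H2), the infimum
`α₀ = inf_{s>0} F(s)/(s²/2)` coincides with the infimum over all admissible
`u ∈ H¹(ℝᴺ)`, `u ≥ 0` a.e., `u` not a.e. zero, `F ∘ u ∈ L¹`, of
`α(u) = (∫ ½|∇u|² + F(u)) / (½ ∫ u²)`. -/
theorem alpha0_eq_inf_alpha (N : ℕ) (hN : 2 ≤ N) (F : ℝ → ℝ)
    (hF : ContDiff ℝ 2 F) (hF0 : F 0 = 0) (hF'0 : deriv F 0 = 0)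
    (hH2 : ∀ s : ℝ, 0 ≤ s → 0 ≤ F s) :
    sInf {r : ℝ | ∃ s : ℝ, 0 < s ∧ r = F s / (s ^ 2 / 2)} =
      sInf {r : ℝ |
        ∃ (u : EuclideanSpace ℝ (Fin N) → ℝ)
          (g : EuclideanSpace ℝ (Fin N) → EuclideanSpace ℝ (Fin N)),
          MemLp u 2 volume ∧ HasWeakGradient u g ∧ MemLp g 2 volume ∧
          (∀ᵐ x : EuclideanSpace ℝ (Fin N) ∂volume, 0 ≤ u x) ∧
          ¬ (u =ᵐ[volume] (fun _ => (0:ℝ))) ∧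
          Integrable (fun x => F (u x)) volume ∧
          r = (∫ x, ((1:ℝ)/2 * ‖g x‖ ^ 2 + F (u x))) /
              ((1:ℝ)/2 * ∫ x, (u x) ^ 2)} := by
  have hN1 : 1 ≤ N := le_trans one_le_two hN
  have hFc : Continuous F := hF.continuous
  set A : Set ℝ := {r : ℝ | ∃ s : ℝ, 0 < s ∧ r = F s / (s ^ 2 / 2)} with hA
  set B : Set ℝ := {r : ℝ |
        ∃ (u : EuclideanSpace ℝ (Fin N) → ℝ)
          (g : EuclideanSpace ℝ (Fin N) → EuclideanSpace ℝ (Fin N)),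
          MemLp u 2 volume ∧ HasWeakGradient u g ∧ MemLp g 2 volume ∧
          (∀ᵐ x : EuclideanSpace ℝ (Fin N) ∂volume, 0 ≤ u x) ∧
          ¬ (u =ᵐ[volume] (fun _ => (0:ℝ))) ∧
          Integrable (fun x => F (u x)) volume ∧
          r = (∫ x, ((1:ℝ)/2 * ‖g x‖ ^ 2 + F (u x))) /
              ((1:ℝ)/2 * ∫ x, (u x) ^ 2)} with hB
  have hAne : A.Nonempty := ⟨F 1 / (1 ^ 2 / 2), 1, one_pos, rfl⟩
  have hBlb : ∀ r ∈ B, 0 ≤ r := by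
    rintro r ⟨u, g, hu, hwg, hg, hpos, hnz, hFu, rfl⟩
    have hnum : 0 ≤ ∫ x, ((1:ℝ)/2 * ‖g x‖ ^ 2 + F (u x)) := by
      apply integral_nonneg_of_ae
      filter_upwards [hpos] with x hx
      have := hH2 (u x) hx
      positivity
    have hden : 0 ≤ (1:ℝ)/2 * ∫ x, (u x) ^ 2 := by
      have : 0 ≤ ∫ x, (u x)^2 := integral_nonneg fun x => sq_nonneg _
      linarith
    exact div_nonneg hnum hden
  have hBne : B.Nonempty := by
    obtain ⟨u, g, h1, h2, h3, h4, h5, h6, -⟩ :=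
      approx (N := N) hN1 F hFc hF0 hH2 1 one_pos 1 one_pos
    exact ⟨_, u, g, h1, h2, h3, h4, h5, h6, rfl⟩
  apply le_antisymm
  · apply le_csInf hBne
    rintro r ⟨u, g, hu, hwg, hg, hpos, hnz, hFu, rfl⟩
    exact lower_bound F hF0 hH2 u g hu hg hpos hnz hFu
  · apply le_csInf hAne
    rintro r ⟨s, hs, rfl⟩
    apply le_of_forall_pos_le_add
    intro ε hε
    obtain ⟨u, g, h1, h2, h3, h4, h5, h6, h7⟩ :=
      approx (N := N) hN1 F hFc hF0 hH2 s hs ε hε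
    calc sInf B ≤ (∫ x, ((1:ℝ)/2 * ‖g x‖ ^ 2 + F (u x))) / ((1:ℝ)/2 * ∫ x, (u x) ^ 2) :=
          csInf_le ⟨0, hBlb⟩ ⟨u, g, h1, h2, h3, h4, h5, h6, rfl⟩
    _ ≤ F s / (s ^ 2 / 2) + ε := h7
end
end

section
/- Let u : ℝ³ → ℝ be a C² function with u ≥ 0 and ω ∈ ℝ such that −Δu + F′(u) = ω²u on ℝ³. Let v ∈ ℝ with |v| < 1, γ = 1/√(1−v²), ω̄ = γω and k = γωv. Then the function ψ_v(t, x₁, x₂, x₃) := u(γ(x₁ − v t), x₂, x₃) · e^{i(k x₁ − ω̄ t)} is a solution of the nonlinear Klein–Gordon equation ∂²ψ/∂t² − Δ_xψ + W′(ψ) = 0 on ℝ × ℝ³. -/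
noncomputable section

/-- Partial derivative in the `i`-th coordinate direction (complex valued). -/
def pderivC {n : ℕ} (i : Fin n) (f : (Fin n → ℝ) → ℂ) (x : Fin n → ℝ) : ℂ :=
  deriv (fun r => f (Function.update x i r)) (x i)

/-- Laplacian in the space variables (complex valued). -/
def lapC {n : ℕ} (f : (Fin n → ℝ) → ℂ) (x : Fin n → ℝ) : ℂ :=
  ∑ i, pderivC i (fun y => pderivC i f y) x

/-- Partial derivative in the `i`-th coordinate direction (real valued). -/
def pderivR {n : ℕ} (i : Fin n) (f : (Fin n → ℝ) → ℝ) (x : Fin n → ℝ) : ℝ :=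
  deriv (fun r => f (Function.update x i r)) (x i)

/-- Laplacian in the space variables (real valued). -/
def lapR {n : ℕ} (f : (Fin n → ℝ) → ℝ) (x : Fin n → ℝ) : ℝ :=
  ∑ i, pderivR i (fun y => pderivR i f y) x

/-- Second time derivative of `ψ : ℝ → (Fin n → ℝ) → ℂ`. -/
def dtt {n : ℕ} (ψ : ℝ → (Fin n → ℝ) → ℂ) (t : ℝ) (x : Fin n → ℝ) : ℂ :=
  deriv (fun s => deriv (fun s' => ψ s' x) s) t

/-- `W'(z) = F'(|z|) z / |z|` for `z ≠ 0`, and `W'(0) = 0`. -/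
def Wderiv (F : ℝ → ℝ) (z : ℂ) : ℂ :=
  if z = 0 then 0 else ((deriv F ‖z‖ : ℝ) : ℂ) * z / (‖z‖ : ℂ)

/-- `ψ` is a solution of the nonlinear Klein–Gordon equation
`∂ₜₜψ − Δψ + W′(ψ) = 0`. -/
def IsNKGSolution {n : ℕ} (F : ℝ → ℝ) (ψ : ℝ → (Fin n → ℝ) → ℂ) : Prop :=
  ∀ (t : ℝ) (x : Fin n → ℝ), dtt ψ t x - lapC (ψ t) x + Wderiv F (ψ t x) = 0

/-! Write `ψ(t, x) = u(Y) e^{iθ}` with `Y` the boosted point and `θ = γωv x₀ - γω t`. Along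
every line used by `∂ₜₜ` and `Δ`, `ψ` has the shape `s ↦ φ(A + Bs) e^{p + qs}`, whose second
derivative is `(B²φ'' + 2qBφ' + q²φ) e^{p + qs}`. In `∂ₜₜψ - Δψ` the coefficients then combine
through `γ²(1 - v²) = 1`: the `∂₀u` terms cancel, `∂₀₀u` gets coefficient `-1` and `u` gets `-ω²`,
leaving `(-Δu - ω²u) e^{iθ}`. Since `u ≥ 0` and `|e^{iθ}| = 1`, also `W'(ψ) = F'(u) e^{iθ}`, so the
Klein–Gordon equation for `ψ` is the profile equation multiplied by the phase. -/

open Complex Function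

section AffineExp

variable {φ : ℝ → ℝ} {A B : ℝ} {p q : ℂ}

lemma hasDerivAt_ofReal_comp_affine_mul_cexp {φ' s : ℝ} (hφ : HasDerivAt φ φ' (A + B * s)) :
    HasDerivAt (fun s : ℝ => (φ (A + B * s) : ℂ) * exp (p + q * s))
      (((B : ℂ) * φ' + q * φ (A + B * s)) * exp (p + q * s)) s := by
  have hφ : HasDerivAt (fun s : ℝ => (φ (A + B * s) : ℂ)) (φ' * B : ℝ) s :=
    (hφ.comp s (by simpa using ((hasDerivAt_id s).const_mul B).const_add A)).ofReal_comp
  have hexp : HasDerivAt (fun s : ℝ => exp (p + q * s)) (exp (p + q * s) * q) s := by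
    simpa using (((hasDerivAt_id (s : ℂ)).const_mul q).const_add p).cexp.comp_ofReal
  refine (hφ.mul hexp).congr_deriv ?_
  push_cast
  ring

lemma deriv_deriv_ofReal_comp_affine_mul_cexp (hφ : ContDiff ℝ 2 φ) (t : ℝ) :
    deriv (deriv fun s : ℝ => (φ (A + B * s) : ℂ) * exp (p + q * s)) t =
      ((B : ℂ) ^ 2 * deriv (deriv φ) (A + B * t) + 2 * q * B * deriv φ (A + B * t)
        + q ^ 2 * φ (A + B * t)) * exp (p + q * t) := by
  have hφ1 : Differentiable ℝ φ := hφ.differentiable (by norm_num)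
  have hφ2 : Differentiable ℝ (deriv φ) :=
    (contDiff_succ_iff_deriv.mp (show ContDiff ℝ (1 + 1) φ from hφ)).2.2.differentiable
      one_ne_zero
  have hderiv : deriv (fun s : ℝ => (φ (A + B * s) : ℂ) * exp (p + q * s)) =
      fun s => B * (((deriv φ (A + B * s) : ℝ) : ℂ) * exp (p + q * s))
        + q * ((φ (A + B * s) : ℂ) * exp (p + q * s)) := by
    ext s
    rw [(hasDerivAt_ofReal_comp_affine_mul_cexp (hφ1 _).hasDerivAt).deriv]
    ring
  have h := ((hasDerivAt_ofReal_comp_affine_mul_cexp (p := p) (q := q)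
    (hφ2 (A + B * t)).hasDerivAt).const_mul (B : ℂ)).add
    ((hasDerivAt_ofReal_comp_affine_mul_cexp (p := p) (q := q)
      (hφ1 (A + B * t)).hasDerivAt).const_mul q)
  rw [hderiv]
  exact h.deriv.trans (by ring)

end AffineExp

lemma Wderiv_ofReal_mul_of_norm_eq_one {F : ℝ → ℝ} (hF'0 : deriv F 0 = 0) {r : ℝ}
    (hr : 0 ≤ r) {z : ℂ} (hz : ‖z‖ = 1) : Wderiv F (r * z) = deriv F r * z := by
  rcases hr.eq_or_lt with rfl | hr
  · simp [Wderiv, hF'0]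
  have hr0 : (r : ℂ) ≠ 0 := ofReal_ne_zero.mpr hr.ne'
  have hrz : (r : ℂ) * z ≠ 0 := mul_ne_zero hr0 (norm_ne_zero_iff.mp (by simp [hz]))
  have hnorm : ‖(r : ℂ) * z‖ = r := by
    rw [norm_mul, hz, norm_real, Real.norm_of_nonneg hr.le, mul_one]
  rw [Wderiv, if_neg hrz, hnorm]
  field_simp

section BoostedWave

variable {n : ℕ}

lemma pderivR_pderivR (f : (Fin n → ℝ) → ℝ) (i : Fin n) (y : Fin n → ℝ) :
    pderivR i (pderivR i f) y = deriv (deriv fun r => f (update y i r)) (y i) := by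
  simp only [pderivR, update_idem, update_self]

lemma pderivC_pderivC (f : (Fin n → ℝ) → ℂ) (i : Fin n) (y : Fin n → ℝ) :
    pderivC i (pderivC i f) y = deriv (deriv fun r => f (update y i r)) (y i) := by
  simp only [pderivC, update_idem, update_self]

def boostedPoint (j : Fin n) (γ v t : ℝ) (x : Fin n → ℝ) : Fin n → ℝ :=
  update x j (γ * (x j - v * t))

def boostedPhase (j : Fin n) (γ v ω t : ℝ) (x : Fin n → ℝ) : ℂ :=
  exp (I * (((γ * ω * v : ℝ) : ℂ) * (x j : ℂ) - ((γ * ω : ℝ) : ℂ) * (t : ℂ)))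

def boostedWave (u : (Fin n → ℝ) → ℝ) (j : Fin n) (γ v ω t : ℝ) (x : Fin n → ℝ) :
    ℂ :=
  (u (boostedPoint j γ v t x) : ℂ) * boostedPhase j γ v ω t x

variable {u : (Fin n → ℝ) → ℝ} {j : Fin n} {γ v ω : ℝ}

@[simp]
lemma boostedPoint_self (t : ℝ) (x : Fin n → ℝ) :
    boostedPoint j γ v t x j = γ * (x j - v * t) :=
  update_self ..

@[simp]
lemma update_boostedPoint_self (t r : ℝ) (x : Fin n → ℝ) :
    update (boostedPoint j γ v t x) j r = update x j r :=
  update_idem ..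

lemma dtt_boostedWave (hu : ContDiff ℝ 2 u) (t : ℝ) (x : Fin n → ℝ) :
    dtt (boostedWave u j γ v ω) t x =
      (((γ * v) ^ 2 : ℝ) * pderivR j (pderivR j u) (boostedPoint j γ v t x)
        + 2 * I * ((γ * ω) * (γ * v) : ℝ) * pderivR j u (boostedPoint j γ v t x)
        - ((γ * ω) ^ 2 : ℝ) * u (boostedPoint j γ v t x))
        * boostedPhase j γ v ω t x := by
  have hφ : ContDiff ℝ 2 fun r => u (update x j r) := hu.comp (contDiff_update 2 x j)
  have hslice : (fun s => boostedWave u j γ v ω s x) = fun s : ℝ =>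
      (u (update x j (γ * x j + -(γ * v) * s)) : ℂ) *
        exp (I * ((γ * ω * v : ℝ) : ℂ) * x j + -(I * ((γ * ω : ℝ) : ℂ)) * s) := by
    ext s
    simp only [boostedWave, boostedPoint, boostedPhase]
    ring_nf
  show deriv (deriv fun s => boostedWave u j γ v ω s x) t = _
  rw [hslice, deriv_deriv_ofReal_comp_affine_mul_cexp hφ, pderivR_pderivR, pderivR]
  simp only [update_boostedPoint_self, boostedPoint_self, boostedPhase]
  unfold boostedPoint
  rw [show γ * x j + -(γ * v) * t = γ * (x j - v * t) by ring]
  rw [show I * ((γ * ω * v : ℝ) : ℂ) * x j + -(I * ((γ * ω : ℝ) : ℂ)) * t =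
    I * (((γ * ω * v : ℝ) : ℂ) * (x j : ℂ) - ((γ * ω : ℝ) : ℂ) * (t : ℂ)) by ring]
  push_cast
  linear_combination (γ * ω : ℂ) ^ 2 * u (update x j (γ * (x j - v * t)))
    * exp (I * ((γ * ω * v) * x j - (γ * ω) * t)) * I_sq

lemma pderivC_pderivC_boostedWave_self (hu : ContDiff ℝ 2 u) (t : ℝ) (x : Fin n → ℝ) :
    pderivC j (pderivC j (boostedWave u j γ v ω t)) x =
      ((γ ^ 2 : ℝ) * pderivR j (pderivR j u) (boostedPoint j γ v t x)
        + 2 * I * ((γ * ω * v) * γ : ℝ) * pderivR j u (boostedPoint j γ v t x)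
        - ((γ * ω * v) ^ 2 : ℝ) * u (boostedPoint j γ v t x))
        * boostedPhase j γ v ω t x := by
  have hφ : ContDiff ℝ 2 fun r => u (update x j r) := hu.comp (contDiff_update 2 x j)
  have hslice : (fun r => boostedWave u j γ v ω t (update x j r)) = fun r : ℝ =>
      (u (update x j (-(γ * (v * t)) + γ * r)) : ℂ) *
        exp (-(I * ((γ * ω : ℝ) : ℂ) * t) + I * ((γ * ω * v : ℝ) : ℂ) * r) := by
    ext r
    simp only [boostedWave, boostedPoint, boostedPhase, update_idem, update_self]
    ring_nf
  rw [pderivC_pderivC, hslice, deriv_deriv_ofReal_comp_affine_mul_cexp hφ, pderivR_pderivR,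
    pderivR]
  simp only [update_boostedPoint_self, boostedPoint_self, boostedPhase]
  unfold boostedPoint
  rw [show -(γ * (v * t)) + γ * x j = γ * (x j - v * t) by ring]
  rw [show -(I * ((γ * ω : ℝ) : ℂ) * t) + I * ((γ * ω * v : ℝ) : ℂ) * x j =
    I * (((γ * ω * v : ℝ) : ℂ) * (x j : ℂ) - ((γ * ω : ℝ) : ℂ) * (t : ℂ)) by ring]
  push_cast
  linear_combination (γ * ω * v : ℂ) ^ 2 * u (update x j (γ * (x j - v * t)))
    * exp (I * ((γ * ω * v) * x j - (γ * ω) * t)) * I_sq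

lemma pderivC_pderivC_boostedWave_of_ne (hu : ContDiff ℝ 2 u) {i : Fin n} (hi : i ≠ j) (t : ℝ)
    (x : Fin n → ℝ) :
    pderivC i (pderivC i (boostedWave u j γ v ω t)) x =
      pderivR i (pderivR i u) (boostedPoint j γ v t x) * boostedPhase j γ v ω t x := by
  have hφ : ContDiff ℝ 2 fun r => u (update (boostedPoint j γ v t x) i r) :=
    hu.comp (contDiff_update 2 _ i)
  have hslice : (fun r => boostedWave u j γ v ω t (update x i r)) = fun r : ℝ =>
      (u (update (boostedPoint j γ v t x) i r) : ℂ) * boostedPhase j γ v ω t x := by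
    ext r
    simp only [boostedWave, boostedPoint, boostedPhase, update_of_ne hi.symm, update_comm hi]
  have hi' : boostedPoint j γ v t x i = x i := update_of_ne hi ..
  rw [pderivC_pderivC, hslice, pderivR_pderivR, hi']
  have h := deriv_deriv_ofReal_comp_affine_mul_cexp (A := 0) (B := 1) (q := 0)
    (p := I * (((γ * ω * v : ℝ) : ℂ) * (x j : ℂ) - ((γ * ω : ℝ) : ℂ) * (t : ℂ)))
    hφ (x i)
  simp only [zero_add, one_mul, zero_mul, add_zero] at h
  unfold boostedPhase
  rw [h]
  push_cast
  ring

lemma norm_boostedPhase (t : ℝ) (x : Fin n → ℝ) : ‖boostedPhase j γ v ω t x‖ = 1 := by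
  rw [boostedPhase, norm_exp]
  simp

lemma lapC_boostedWave (hu : ContDiff ℝ 2 u) (t : ℝ) (x : Fin n → ℝ) :
    lapC (boostedWave u j γ v ω t) x =
      ((γ ^ 2 : ℝ) * pderivR j (pderivR j u) (boostedPoint j γ v t x)
        + 2 * I * ((γ * ω * v) * γ : ℝ) * pderivR j u (boostedPoint j γ v t x)
        - ((γ * ω * v) ^ 2 : ℝ) * u (boostedPoint j γ v t x)
        + ∑ i ∈ {j}ᶜ, (pderivR i (pderivR i u) (boostedPoint j γ v t x) : ℂ))
        * boostedPhase j γ v ω t x := by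
  rw [lapC, Fintype.sum_eq_add_sum_compl j, pderivC_pderivC_boostedWave_self hu,
    Finset.sum_congr rfl fun i hi => pderivC_pderivC_boostedWave_of_ne hu
      (Finset.mem_compl.mp hi ∘ Finset.mem_singleton.mpr) t x, ← Finset.sum_mul]
  ring

theorem isNKGSolution_boostedWave {F : ℝ → ℝ} (hF'0 : deriv F 0 = 0) (hu : ContDiff ℝ 2 u)
    (hupos : ∀ x, 0 ≤ u x) (hsol : ∀ x, -lapR u x + deriv F (u x) = ω ^ 2 * u x)
    (hγ : γ ^ 2 * (1 - v ^ 2) = 1) :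
    IsNKGSolution F (boostedWave u j γ v ω) := by
  intro t x
  set Y := boostedPoint j γ v t x
  have hsolY := hsol Y
  rw [lapR, Fintype.sum_eq_add_sum_compl j] at hsolY
  rw [dtt_boostedWave hu, lapC_boostedWave hu, boostedWave,
    Wderiv_ofReal_mul_of_norm_eq_one hF'0 (hupos Y) (norm_boostedPhase t x)]
  have hsolC := congrArg ((↑) : ℝ → ℂ) hsolY
  have hγC := congrArg ((↑) : ℝ → ℂ) hγ
  push_cast at hsolC hγC ⊢
  linear_combination boostedPhase j γ v ω t x * hsolC
    + (-(boostedPhase j γ v ω t x * ((pderivR j (pderivR j u) Y : ℂ) + ω ^ 2 * u Y))) * hγC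

end BoostedWave

theorem travelling_wave_solution_general (F : ℝ → ℝ)
    (hF'0 : deriv F 0 = 0)
    (u : (Fin 3 → ℝ) → ℝ) (hu : ContDiff ℝ 2 u) (hupos : ∀ x, 0 ≤ u x)
    (ω : ℝ)
    (hsol : ∀ x, -lapR u x + deriv F (u x) = ω ^ 2 * u x)
    (v : ℝ) (hv : |v| < 1) :
    IsNKGSolution F (fun t x =>
      ((u (Function.update x 0 ((1 / Real.sqrt (1 - v ^ 2)) * (x 0 - v * t))) : ℝ) : ℂ) *
        Complex.exp (Complex.I *
          ((((1 / Real.sqrt (1 - v ^ 2)) * ω * v : ℝ) : ℂ) * ((x 0 : ℝ) : ℂ) -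
            (((1 / Real.sqrt (1 - v ^ 2)) * ω : ℝ) : ℂ) * ((t : ℝ) : ℂ)))) := by
  have hv2 : 0 < 1 - v ^ 2 := by nlinarith [abs_lt.mp hv]
  have hγ : (1 / Real.sqrt (1 - v ^ 2)) ^ 2 * (1 - v ^ 2) = 1 := by
    rw [div_pow, one_pow, Real.sq_sqrt hv2.le, one_div_mul_cancel hv2.ne']
  exact isNKGSolution_boostedWave hF'0 hu hupos hsol hγ

/-- From a standing wave profile `u` (a nonnegative `C²`
solution of `−Δu + F′(u) = ω²u`) one obtains, after a Lorentz boost with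
velocity `v`, a travelling solitary wave solution
`ψ_v(t,x) = u(γ(x₁−vt),x₂,x₃) e^{i(kx₁−ω̄t)}` of the nonlinear Klein–Gordon
equation, where `γ = 1/√(1−v²)`, `ω̄ = γω`, `k = γωv`. -/
theorem travelling_wave_solution (F : ℝ → ℝ) (hF : ContDiff ℝ 2 F)
    (hF'0 : deriv F 0 = 0)
    (u : (Fin 3 → ℝ) → ℝ) (hu : ContDiff ℝ 2 u) (hupos : ∀ x, 0 ≤ u x)
    (ω : ℝ)
    (hsol : ∀ x, -lapR u x + deriv F (u x) = ω ^ 2 * u x)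
    (v : ℝ) (hv : |v| < 1) :
    IsNKGSolution F (fun t x =>
      ((u (Function.update x 0 ((1 / Real.sqrt (1 - v ^ 2)) * (x 0 - v * t))) : ℝ) : ℂ) *
        Complex.exp (Complex.I *
          ((((1 / Real.sqrt (1 - v ^ 2)) * ω * v : ℝ) : ℂ) * ((x 0 : ℝ) : ℂ) -
            (((1 / Real.sqrt (1 - v ^ 2)) * ω : ℝ) : ℂ) * ((t : ℝ) : ℂ)))) :=
  travelling_wave_solution_general F hF'0 u hu hupos ω hsol v hv
end
end

section
/- Assume N ≥ 3 and that F satisfies (H0), (H2) and (H3). Let C̄ < 0, suppose M_{C̄} is nonempty, and set m := inf{E(u,ω) : (u,ω) ∈ M_{C̄}}. Let (u_n,ω_n) be a minimizing sequence, i.e. (u_n,ω_n) ∈ M_{C̄} and E(u_n,ω_n) → m, and suppose ∫_{ℝᴺ} u_n² dx → ρ for some ρ > 0. Then inf{J(u) : u ∈ H¹(ℝᴺ,ℝ), u ≥ 0 a.e., ∫_{ℝᴺ} u² dx = ρ} = m − ρ/2 − C̄²/(2ρ), where J(u) := ∫_{ℝᴺ} (½|∇u|² + F(u) − ½u²) dx.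 -/
open MeasureTheory

noncomputable section

/-- An admissible pair `(u,ω)` (with the weak gradient `g` of `u` recorded):
`u ∈ H¹(ℝᴺ)`, `u ≥ 0` a.e., `F ∘ u ∈ L¹`, and `ω > 0`. -/
def Admissible {N : ℕ} (F : ℝ → ℝ) (u : EuclideanSpace ℝ (Fin N) → ℝ)
    (g : EuclideanSpace ℝ (Fin N) → EuclideanSpace ℝ (Fin N)) (ω : ℝ) : Prop :=
  MemLp u 2 volume ∧ HasWeakGradient u g ∧ MemLp g 2 volume ∧
    (∀ᵐ x : EuclideanSpace ℝ (Fin N) ∂volume, 0 ≤ u x) ∧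
    Integrable (fun x => F (u x)) volume ∧ 0 < ω

/-- The energy `E(u,ω) = ∫ (½|∇u|² + ½ω²u² + F(u))`. -/
def energy {N : ℕ} (F : ℝ → ℝ) (u : EuclideanSpace ℝ (Fin N) → ℝ)
    (g : EuclideanSpace ℝ (Fin N) → EuclideanSpace ℝ (Fin N)) (ω : ℝ) : ℝ :=
  ∫ x, ((1:ℝ)/2 * ‖g x‖ ^ 2 + (1:ℝ)/2 * ω ^ 2 * (u x) ^ 2 + F (u x))

/-- The charge `C(u,ω) = -ω ∫ u²`. -/
def charge {N : ℕ} (u : EuclideanSpace ℝ (Fin N) → ℝ) (ω : ℝ) : ℝ :=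
  -ω * ∫ x, (u x) ^ 2

/-- The set of energy values over the constraint manifold `M_C`. -/
def energySet (N : ℕ) (F : ℝ → ℝ) (C : ℝ) : Set ℝ :=
  {e | ∃ (u : EuclideanSpace ℝ (Fin N) → ℝ)
        (g : EuclideanSpace ℝ (Fin N) → EuclideanSpace ℝ (Fin N)) (ω : ℝ),
        Admissible F u g ω ∧ charge u ω = C ∧ e = energy F u g ω}

/-- Hypothesis (H0). -/
def H0 (F : ℝ → ℝ) : Prop := F 0 = 0 ∧ deriv F 0 = 0 ∧ deriv (deriv F) 0 = 1

/-- Hypothesis (H1): `inf_{s>0} F(s)/(s²/2) < 1`. -/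
def H1 (F : ℝ → ℝ) : Prop := sInf {r : ℝ | ∃ s : ℝ, 0 < s ∧ r = F s / (s ^ 2 / 2)} < 1

/-- Hypothesis (H2). -/
def H2 (F : ℝ → ℝ) : Prop := ∀ s : ℝ, 0 ≤ s → 0 ≤ F s

/-- Hypothesis (H3): growth control on `R'' ` where `R(s) = F(s) − s²/2`. -/
def H3 (N : ℕ) (F : ℝ → ℝ) : Prop :=
  ∃ c₁ c₂ p q : ℝ, 0 < c₁ ∧ 0 < c₂ ∧ 2 < p ∧ p ≤ q ∧ q < 2 * (N:ℝ) / ((N:ℝ) - 2) ∧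
    ∀ s : ℝ, 0 < s →
      |deriv (deriv (fun t => F t - t ^ 2 / 2)) s| ≤ c₁ * s ^ (p - 2) + c₂ * s ^ (q - 2)

/-- The set of values of `J(u) = ∫ (½|∇u|² + F(u) − ½u²)` over the sphere
`N_ρ = {u ∈ H¹ : u ≥ 0 a.e., ∫ u² = ρ}`. -/
def JSet (N : ℕ) (F : ℝ → ℝ) (ρ : ℝ) : Set ℝ :=
  {j | ∃ (u : EuclideanSpace ℝ (Fin N) → ℝ)
        (g : EuclideanSpace ℝ (Fin N) → EuclideanSpace ℝ (Fin N)),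
        MemLp u 2 volume ∧ HasWeakGradient u g ∧ MemLp g 2 volume ∧
        (∀ᵐ x : EuclideanSpace ℝ (Fin N) ∂volume, 0 ≤ u x) ∧
        Integrable (fun x => F (u x)) volume ∧
        (∫ x, (u x) ^ 2) = ρ ∧
        j = ∫ x, ((1:ℝ)/2 * ‖g x‖ ^ 2 + F (u x) - (1:ℝ)/2 * (u x) ^ 2)}

namespace InfJHelper

variable {N : ℕ}

local notation "Sp" => EuclideanSpace ℝ (Fin N)

lemma qmp_smul (c : ℝ) (hc : c ≠ 0) :
    Measure.QuasiMeasurePreserving (fun x : Sp => c • x) volume volume := by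
  refine ⟨measurable_const_smul c, ?_⟩
  rw [Measure.map_addHaar_smul volume hc]
  exact Measure.smul_absolutelyContinuous

lemma int_scale (c : ℝ) (hc : 0 < c) (f : Sp → ℝ) :
    ∫ x, f (c • x) = (c ^ N)⁻¹ * ∫ x, f x := by
  rw [Measure.integral_comp_smul_of_nonneg volume f c (hR := hc.le),
    finrank_euclideanSpace_fin, smul_eq_mul]

lemma fderiv_comp_smul (φ : Sp → ℝ) (hφ : ContDiff ℝ (⊤ : ℕ∞) φ) (c : ℝ) (y v : Sp) :
    fderiv ℝ (fun z => φ (c • z)) y v = fderiv ℝ φ (c • y) (c • v) := by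
  have h1 : HasFDerivAt (fun z : Sp => c • z) (c • ContinuousLinearMap.id ℝ Sp) y :=
    (hasFDerivAt_id y).const_smul c
  have h2 : HasFDerivAt φ (fderiv ℝ φ (c • y)) (c • y) :=
    (hφ.differentiable (by simp) (c • y)).hasFDerivAt
  have h3 : HasFDerivAt (fun z => φ (c • z))
      ((fderiv ℝ φ (c • y)).comp (c • ContinuousLinearMap.id ℝ Sp)) y := h2.comp y h1
  rw [h3.fderiv]
  simp

lemma hasWeakGradient_scale {u : Sp → ℝ} {g : Sp → Sp}
    (hw : HasWeakGradient u g) {c : ℝ} (hc : 0 < c) :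
    HasWeakGradient (fun x => u (c • x)) (fun x => c • g (c • x)) := by
  intro φ hφ hφc i
  set ψ : Sp → ℝ := fun y => φ (c⁻¹ • y) with hψdef
  have hcne : c ≠ 0 := hc.ne'
  have hψ : ContDiff ℝ (⊤ : ℕ∞) ψ := hφ.comp (contDiff_id.const_smul c⁻¹)
  have hψc : HasCompactSupport ψ := hφc.comp_smul (inv_ne_zero hcne)
  have key := hw ψ hψ hψc i
  have hfd : ∀ x : Sp, fderiv ℝ φ x (EuclideanSpace.single i 1)
      = c * fderiv ℝ ψ (c • x) (EuclideanSpace.single i 1) := by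
    intro x
    have := fderiv_comp_smul φ hφ c⁻¹ (c • x) (EuclideanSpace.single i 1)
    rw [hψdef]
    rw [this, inv_smul_smul₀ hcne, (fderiv ℝ φ x).map_smul, smul_eq_mul]
    field_simp
  have hL : ∫ x, u (c • x) * fderiv ℝ φ x (EuclideanSpace.single i 1)
      = (c ^ N)⁻¹ * (c * ∫ y, u y * fderiv ℝ ψ y (EuclideanSpace.single i 1)) := by
    have e1 : (fun x => u (c • x) * fderiv ℝ φ x (EuclideanSpace.single i 1))
        = fun x => (fun y => c * (u y * fderiv ℝ ψ y (EuclideanSpace.single i 1))) (c • x) := by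
      funext x
      simp only [hfd x]
      ring
    calc ∫ x, u (c • x) * fderiv ℝ φ x (EuclideanSpace.single i 1)
        = ∫ x, (fun y => c * (u y * fderiv ℝ ψ y (EuclideanSpace.single i 1))) (c • x) := by
          rw [e1]
      _ = (c ^ N)⁻¹ * ∫ y, c * (u y * fderiv ℝ ψ y (EuclideanSpace.single i 1)) :=
          int_scale c hc (fun y => c * (u y * fderiv ℝ ψ y (EuclideanSpace.single i 1)))
      _ = (c ^ N)⁻¹ * (c * ∫ y, u y * fderiv ℝ ψ y (EuclideanSpace.single i 1)) := by
          rw [integral_const_mul]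
  have hR : ∫ x, (c • g (c • x)) i * φ x
      = (c ^ N)⁻¹ * (c * ∫ y, g y i * ψ y) := by
    have e2 : (fun x => (c • g (c • x)) i * φ x)
        = fun x => (fun y => c * (g y i * ψ y)) (c • x) := by
      funext x
      have : ψ (c • x) = φ x := by rw [hψdef]; simp [inv_smul_smul₀ hcne]
      simp only [this, PiLp.smul_apply, smul_eq_mul]
      ring
    calc ∫ x, (c • g (c • x)) i * φ x
        = ∫ x, (fun y => c * (g y i * ψ y)) (c • x) := by rw [e2]
      _ = (c ^ N)⁻¹ * ∫ y, c * (g y i * ψ y) := int_scale c hc (fun y => c * (g y i * ψ y))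
      _ = (c ^ N)⁻¹ * (c * ∫ y, g y i * ψ y) := by rw [integral_const_mul]
  rw [hL, hR, key]
  ring

lemma integrable_sq_of_memL2 {f : Sp → ℝ} (hf : MemLp f 2 volume) :
    Integrable (fun x => (f x) ^ 2) volume :=
  (memLp_two_iff_integrable_sq hf.aestronglyMeasurable).1 hf

lemma integrable_sq_norm {g : Sp → Sp} (hg : MemLp g 2 volume) :
    Integrable (fun x => ‖g x‖ ^ 2) volume :=
  (memLp_two_iff_integrable_sq_norm hg.aestronglyMeasurable).1 hg

lemma memL2_scale {f : Sp → ℝ} (hf : MemLp f 2 volume) {c : ℝ} (hc : 0 < c) :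
    MemLp (fun x => f (c • x)) 2 volume := by
  have ha : AEStronglyMeasurable (fun x : Sp => f (c • x)) volume :=
    hf.aestronglyMeasurable.comp_quasiMeasurePreserving (qmp_smul c hc.ne')
  refine (memLp_two_iff_integrable_sq ha).2 ?_
  exact (integrable_sq_of_memL2 hf).comp_smul hc.ne'

lemma memL2_vec_scale {g : Sp → Sp} (hg : MemLp g 2 volume) {c : ℝ} (hc : 0 < c) :
    MemLp (fun x => c • g (c • x)) 2 volume := by
  have ha : AEStronglyMeasurable (fun x : Sp => g (c • x)) volume :=
    hg.aestronglyMeasurable.comp_quasiMeasurePreserving (qmp_smul c hc.ne')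
  have h1 : MemLp (fun x : Sp => g (c • x)) 2 volume :=
    (memLp_two_iff_integrable_sq_norm ha).2 ((integrable_sq_norm hg).comp_smul hc.ne')
  exact h1.const_smul c

lemma energy_eq (F : ℝ → ℝ) (u : Sp → ℝ) (g : Sp → Sp) (ω : ℝ)
    (ig : Integrable (fun x => ‖g x‖ ^ 2) volume)
    (iu : Integrable (fun x => (u x) ^ 2) volume)
    (iF : Integrable (fun x => F (u x)) volume) :
    energy F u g ω = 1/2 * (∫ x, ‖g x‖ ^ 2) + 1/2 * ω ^ 2 * (∫ x, (u x) ^ 2)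
      + ∫ x, F (u x) := by
  unfold energy
  have i1 : Integrable (fun x : Sp => (1:ℝ)/2 * ‖g x‖ ^ 2 + (1:ℝ)/2 * ω ^ 2 * (u x) ^ 2)
      volume := (ig.const_mul ((1:ℝ)/2)).add (iu.const_mul ((1:ℝ)/2 * ω ^ 2))
  rw [integral_add i1 iF,
    integral_add (ig.const_mul ((1:ℝ)/2)) (iu.const_mul ((1:ℝ)/2 * ω ^ 2)),
    integral_const_mul, integral_const_mul]

lemma J_eq (F : ℝ → ℝ) (u : Sp → ℝ) (g : Sp → Sp)
    (ig : Integrable (fun x => ‖g x‖ ^ 2) volume)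
    (iu : Integrable (fun x => (u x) ^ 2) volume)
    (iF : Integrable (fun x => F (u x)) volume) :
    (∫ x, ((1:ℝ)/2 * ‖g x‖ ^ 2 + F (u x) - (1:ℝ)/2 * (u x) ^ 2))
      = 1/2 * (∫ x, ‖g x‖ ^ 2) + (∫ x, F (u x)) - 1/2 * (∫ x, (u x) ^ 2) := by
  have i1 : Integrable (fun x : Sp => (1:ℝ)/2 * ‖g x‖ ^ 2 + F (u x)) volume :=
    (ig.const_mul ((1:ℝ)/2)).add iF
  rw [integral_sub i1 (iu.const_mul ((1:ℝ)/2)),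
    integral_add (ig.const_mul ((1:ℝ)/2)) iF, integral_const_mul, integral_const_mul]

lemma scaled_mem_JSet (F : ℝ → ℝ) {u : Sp → ℝ} {g : Sp → Sp}
    (hu : MemLp u 2 volume) (hw : HasWeakGradient u g) (hg : MemLp g 2 volume)
    (hpos : ∀ᵐ x : Sp ∂volume, 0 ≤ u x) (hFi : Integrable (fun x => F (u x)) volume)
    {c : ℝ} (hc : 0 < c) {ρ : ℝ} (hcρ : (c ^ N)⁻¹ * ∫ x, (u x) ^ 2 = ρ) :
    (1/2 * (c ^ 2 * ((c ^ N)⁻¹ * ∫ x, ‖g x‖ ^ 2)) + (c ^ N)⁻¹ * (∫ x, F (u x)) - ρ/2)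
      ∈ JSet N F ρ := by
  have hcne : c ≠ 0 := hc.ne'
  have hFi' : Integrable (fun x : Sp => F (u (c • x))) volume := hFi.comp_smul hcne
  have hpos' : ∀ᵐ x : Sp ∂volume, 0 ≤ u (c • x) := (qmp_smul c hcne).ae hpos
  have hsq : (∫ x, (u (c • x)) ^ 2) = (c ^ N)⁻¹ * ∫ x, (u x) ^ 2 :=
    int_scale c hc (fun y => (u y) ^ 2)
  have hFsc : (∫ x, F (u (c • x))) = (c ^ N)⁻¹ * ∫ x, F (u x) :=
    int_scale c hc (fun y => F (u y))
  have hnormsc : (∫ x, ‖g (c • x)‖ ^ 2) = (c ^ N)⁻¹ * ∫ x, ‖g x‖ ^ 2 :=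
    int_scale c hc (fun y => ‖g y‖ ^ 2)
  have hnorm_h : (fun x : Sp => ‖c • g (c • x)‖ ^ 2) = fun x => c ^ 2 * ‖g (c • x)‖ ^ 2 := by
    funext x; rw [norm_smul, mul_pow, Real.norm_eq_abs, sq_abs]
  have ih : Integrable (fun x : Sp => ‖c • g (c • x)‖ ^ 2) volume := by
    rw [hnorm_h]; exact ((integrable_sq_norm hg).comp_smul hcne).const_mul _
  have iv : Integrable (fun x : Sp => (u (c • x)) ^ 2) volume :=
    (integrable_sq_of_memL2 hu).comp_smul hcne
  refine ⟨fun x => u (c • x), fun x => c • g (c • x), memL2_scale hu hc,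
    hasWeakGradient_scale hw hc, memL2_vec_scale hg hc, hpos', hFi', ?_, ?_⟩
  · rw [hsq, hcρ]
  · have hJv : ∫ x, ((1:ℝ)/2 * ‖c • g (c • x)‖ ^ 2 + F (u (c • x)) - (1:ℝ)/2 * (u (c • x)) ^ 2)
        = 1/2 * (∫ x, ‖c • g (c • x)‖ ^ 2) + (∫ x, F (u (c • x)))
          - 1/2 * (∫ x, (u (c • x)) ^ 2) :=
      J_eq F (fun x => u (c • x)) (fun x => c • g (c • x)) ih iv hFi'
    show _ = ∫ x, ((1:ℝ)/2 * ‖c • g (c • x)‖ ^ 2 + F (u (c • x)) - (1:ℝ)/2 * (u (c • x)) ^ 2)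
    have h1 : (∫ x, ‖c • g (c • x)‖ ^ 2) = c ^ 2 * ((c ^ N)⁻¹ * ∫ x, ‖g x‖ ^ 2) := by
      calc (∫ x, ‖c • g (c • x)‖ ^ 2) = ∫ x, c ^ 2 * ‖g (c • x)‖ ^ 2 := by rw [hnorm_h]
        _ = c ^ 2 * ∫ x, ‖g (c • x)‖ ^ 2 := integral_const_mul _ _
        _ = c ^ 2 * ((c ^ N)⁻¹ * ∫ x, ‖g x‖ ^ 2) := by rw [hnormsc]
    rw [hJv, h1, hFsc, hsq, hcρ]
    ring

lemma energySet_nonneg (F : ℝ → ℝ) (h2 : H2 F) (Cb : ℝ) :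
    ∀ e ∈ energySet N F Cb, 0 ≤ e := by
  rintro e ⟨u, g, ω, ⟨hu, hw, hg, hpos, hFi, hω⟩, hch, rfl⟩
  unfold energy
  apply integral_nonneg_of_ae
  filter_upwards [hpos] with x hx
  have hF := h2 _ hx
  have a1 : (0:ℝ) ≤ (1:ℝ)/2 * ‖g x‖ ^ 2 := by positivity
  have a2 : (0:ℝ) ≤ (1:ℝ)/2 * ω ^ 2 * (u x) ^ 2 := by positivity
  simp only [Pi.zero_apply]
  linarith

lemma J_lower (F : ℝ → ℝ) (h2 : H2 F) {Cb ρ m : ℝ} (hCb : Cb < 0) (hρ : 0 < ρ)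
    (hm : m = sInf (energySet N F Cb)) :
    ∀ j ∈ JSet N F ρ, m - ρ/2 - Cb ^ 2/(2*ρ) ≤ j := by
  rintro j ⟨w, gw, hu, hwg, hg, hpos, hFi, hsq, rfl⟩
  have hρne : ρ ≠ 0 := hρ.ne'
  set ω' : ℝ := -Cb / ρ with hω'
  have hω'pos : 0 < ω' := div_pos (by linarith) hρ
  have hchw : charge w ω' = Cb := by
    unfold charge; rw [hsq, hω']; field_simp
  have hmem : energy F w gw ω' ∈ energySet N F Cb :=
    ⟨w, gw, ω', ⟨hu, hwg, hg, hpos, hFi, hω'pos⟩, hchw, rfl⟩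
  have hbdd : BddBelow (energySet N F Cb) :=
    ⟨0, fun e he => energySet_nonneg F h2 Cb e he⟩
  have hle : m ≤ energy F w gw ω' := hm ▸ csInf_le hbdd hmem
  have ig := integrable_sq_norm hg
  have iu := integrable_sq_of_memL2 hu
  have hE := energy_eq F w gw ω' ig iu hFi
  have hJ := J_eq F w gw ig iu hFi
  rw [hsq] at hE hJ
  rw [hJ]
  have hmid : 1/2 * ω' ^ 2 * ρ = Cb ^ 2/(2*ρ) := by
    rw [hω']; field_simp
  rw [hE, hmid] at hle
  linarith

end InfJHelper

/-- Along a minimizing sequence for `E` on `M_C̄` whose `L²`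
norms converge to `ρ > 0`, one has
`inf_{N_ρ} J = m − ρ/2 − C̄²/(2ρ)`. -/
theorem inf_J_eq (N : ℕ) (hN : 3 ≤ N)
    (F : ℝ → ℝ) (hF : ContDiff ℝ 2 F) (h0 : H0 F) (h2 : H2 F) (h3 : H3 N F)
    (Cb : ℝ) (hCb : Cb < 0) (hne : (energySet N F Cb).Nonempty)
    (m : ℝ) (hm : m = sInf (energySet N F Cb))
    (u : ℕ → EuclideanSpace ℝ (Fin N) → ℝ)
    (g : ℕ → EuclideanSpace ℝ (Fin N) → EuclideanSpace ℝ (Fin N))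
    (ω : ℕ → ℝ)
    (hadm : ∀ n, Admissible F (u n) (g n) (ω n))
    (hch : ∀ n, charge (u n) (ω n) = Cb)
    (hmin : Filter.Tendsto (fun n => energy F (u n) (g n) (ω n))
      Filter.atTop (nhds m))
    (ρ : ℝ) (hρ : 0 < ρ)
    (hL2 : Filter.Tendsto (fun n => ∫ x, (u n x) ^ 2) Filter.atTop (nhds ρ)) :
    sInf (JSet N F ρ) = m - ρ / 2 - Cb ^ 2 / (2 * ρ) := by
  classical
  open Filter InfJHelper in
  have hlow := InfJHelper.J_lower (N := N) F h2 hCb hρ hm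
  have hωpos : ∀ n, 0 < ω n := fun n => (hadm n).2.2.2.2.2
  have hupos : ∀ n, ∀ᵐ x : EuclideanSpace ℝ (Fin N) ∂volume, 0 ≤ u n x :=
    fun n => (hadm n).2.2.2.1
  have hFint : ∀ n, Integrable (fun x => F (u n x)) volume := fun n => (hadm n).2.2.2.2.1
  have huL2 : ∀ n, MemLp (u n) 2 volume := fun n => (hadm n).1
  have hgL2 : ∀ n, MemLp (g n) 2 volume := fun n => (hadm n).2.2.1
  have hwg : ∀ n, HasWeakGradient (u n) (g n) := fun n => (hadm n).2.1
  set t : ℕ → ℝ := fun n => ∫ x, (u n x) ^ 2 with ht_def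
  have hωt : ∀ n, ω n * t n = -Cb := by
    intro n
    have h : -(ω n) * t n = Cb := hch n
    linear_combination -h
  have htpos : ∀ n, 0 < t n := by
    intro n
    by_contra hle
    push_neg at hle
    have h1 : 0 ≤ ω n * (-(t n)) := mul_nonneg (hωpos n).le (by linarith)
    have h2' := hωt n
    nlinarith
  set a : ℕ → ℝ := fun n => ∫ x, ‖g n x‖ ^ 2 with ha_def
  set f : ℕ → ℝ := fun n => ∫ x, F (u n x) with hf_def
  have ig : ∀ n, Integrable (fun x => ‖g n x‖ ^ 2) volume :=
    fun n => InfJHelper.integrable_sq_norm (hgL2 n)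
  have iu : ∀ n, Integrable (fun x => (u n x) ^ 2) volume :=
    fun n => InfJHelper.integrable_sq_of_memL2 (huL2 n)
  have hE : ∀ n, energy F (u n) (g n) (ω n)
      = 1/2 * a n + 1/2 * (ω n) ^ 2 * t n + f n :=
    fun n => InfJHelper.energy_eq F (u n) (g n) (ω n) (ig n) (iu n) (hFint n)
  have hω_eq : ∀ n, ω n = -Cb / t n := by
    intro n
    have h0' := (htpos n).ne'
    field_simp
    linear_combination hωt n
  have hmid : ∀ n, 1/2 * (ω n) ^ 2 * t n = Cb ^ 2 / (2 * t n) := by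
    intro n
    have h0' := (htpos n).ne'
    rw [hω_eq n]
    field_simp
  set J : ℕ → ℝ := fun n => 1/2 * a n + f n - t n / 2 with hJ_def
  have hJn : ∀ n, J n = energy F (u n) (g n) (ω n) - Cb ^ 2/(2 * t n) - t n/2 := by
    intro n
    simp only [hJ_def]
    rw [hE n, hmid n]
    ring
  have htlim : Filter.Tendsto t Filter.atTop (nhds ρ) := hL2
  have hJlim : Filter.Tendsto J Filter.atTop (nhds (m - Cb ^ 2/(2*ρ) - ρ/2)) := by
    have h1 : Filter.Tendsto (fun n => Cb ^ 2/(2 * t n)) Filter.atTop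
        (nhds (Cb ^ 2/(2*ρ))) :=
      Filter.Tendsto.div tendsto_const_nhds (htlim.const_mul 2) (by positivity)
    have h2' : Filter.Tendsto (fun n => t n / 2) Filter.atTop (nhds (ρ/2)) :=
      htlim.div_const 2
    exact Filter.Tendsto.congr (fun n => (hJn n).symm) ((hmin.sub h1).sub h2')
  set c : ℕ → ℝ := fun n => (t n / ρ) ^ ((N:ℝ)⁻¹) with hc_def
  have hcpos : ∀ n, 0 < c n := fun n => Real.rpow_pos_of_pos (div_pos (htpos n) hρ) _
  have hNne : ((N:ℝ)) ≠ 0 := Nat.cast_ne_zero.2 (by omega)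
  have hcN : ∀ n, (c n) ^ N = t n / ρ := by
    intro n
    have hx : (0:ℝ) ≤ t n / ρ := (div_pos (htpos n) hρ).le
    simp only [hc_def]
    rw [← Real.rpow_natCast ((t n / ρ) ^ ((N:ℝ)⁻¹)) N, ← Real.rpow_mul hx,
      inv_mul_cancel₀ hNne, Real.rpow_one]
  have hcNinv : ∀ n, ((c n) ^ N)⁻¹ = ρ / t n := by
    intro n; rw [hcN n, inv_div]
  have hcρ : ∀ n, ((c n) ^ N)⁻¹ * t n = ρ := by
    intro n
    rw [hcNinv n]
    exact div_mul_cancel₀ ρ (htpos n).ne'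
  set Jv : ℕ → ℝ := fun n =>
    1/2 * ((c n) ^ 2 * (((c n) ^ N)⁻¹ * a n)) + ((c n) ^ N)⁻¹ * f n - ρ/2 with hJv_def
  have hmemJ : ∀ n, Jv n ∈ JSet N F ρ := fun n =>
    InfJHelper.scaled_mem_JSet F (huL2 n) (hwg n) (hgL2 n) (hupos n) (hFint n)
      (hcpos n) (hcρ n)
  have hbddJ : BddBelow (JSet N F ρ) := ⟨m - ρ/2 - Cb ^ 2/(2*ρ), fun j hj => hlow j hj⟩
  have hJne : (JSet N F ρ).Nonempty := ⟨Jv 0, hmemJ 0⟩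
  obtain ⟨M, hM⟩ : ∃ M, ∀ n, energy F (u n) (g n) (ω n) ≤ M := by
    obtain ⟨M, hM⟩ := hmin.bddAbove_range
    exact ⟨M, fun n => hM (Set.mem_range_self n)⟩
  have ha_nonneg : ∀ n, 0 ≤ a n := fun n => integral_nonneg (fun x => by positivity)
  have hf_nonneg : ∀ n, 0 ≤ f n := by
    intro n
    apply integral_nonneg_of_ae
    filter_upwards [hupos n] with x hx
    simpa using h2 _ hx
  have hmid_nonneg : ∀ n, 0 ≤ 1/2 * (ω n) ^ 2 * t n :=
    fun n => mul_nonneg (by positivity) (htpos n).le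
  have haM : ∀ n, 1/2 * a n ≤ M := by
    intro n
    have := hE n
    have := hM n
    have := hf_nonneg n
    have := hmid_nonneg n
    linarith
  have hfM : ∀ n, f n ≤ M := by
    intro n
    have := hE n
    have := hM n
    have := ha_nonneg n
    have := hmid_nonneg n
    linarith
  have hratio : Filter.Tendsto (fun n => ρ / t n) Filter.atTop (nhds 1) := by
    have h1 := Filter.Tendsto.div
      (tendsto_const_nhds : Filter.Tendsto (fun _ : ℕ => ρ) Filter.atTop (nhds ρ)) htlim hρ.ne'
    rw [div_self hρ.ne'] at h1
    exact h1
  have hclim : Filter.Tendsto c Filter.atTop (nhds 1) := by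
    have h1 : Filter.Tendsto (fun n => t n / ρ) Filter.atTop (nhds 1) := by
      simpa [div_self hρ.ne'] using htlim.div_const ρ
    have h2' := h1.rpow
      (tendsto_const_nhds : Filter.Tendsto (fun _ : ℕ => ((N:ℝ)⁻¹)) Filter.atTop (nhds ((N:ℝ)⁻¹)))
      (Or.inl one_ne_zero)
    simpa [Real.one_rpow] using h2'
  have hz1 : Filter.Tendsto (fun n => ((c n) ^ 2 * (ρ / t n) - 1) * (1/2 * a n))
      Filter.atTop (nhds 0) := by
    have hcoef : Filter.Tendsto (fun n => (c n) ^ 2 * (ρ / t n) - 1) Filter.atTop (nhds 0) := by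
      have h1 := ((hclim.pow 2).mul hratio).sub_const 1
      simpa using h1
    apply squeeze_zero_norm (a := fun n => |(c n) ^ 2 * (ρ / t n) - 1| * M)
    · intro n
      rw [Real.norm_eq_abs, abs_mul, abs_of_nonneg (by linarith [ha_nonneg n] : (0:ℝ) ≤ 1/2 * a n)]
      exact mul_le_mul_of_nonneg_left (haM n) (abs_nonneg _)
    · have h1 := hcoef.abs.mul_const M
      simpa using h1
  have hz2 : Filter.Tendsto (fun n => ((ρ / t n) - 1) * f n) Filter.atTop (nhds 0) := by
    have hcoef : Filter.Tendsto (fun n => (ρ / t n) - 1) Filter.atTop (nhds 0) := by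
      have h1 := hratio.sub_const 1
      simpa using h1
    apply squeeze_zero_norm (a := fun n => |(ρ / t n) - 1| * M)
    · intro n
      rw [Real.norm_eq_abs, abs_mul, abs_of_nonneg (hf_nonneg n)]
      exact mul_le_mul_of_nonneg_left (hfM n) (abs_nonneg _)
    · have h1 := hcoef.abs.mul_const M
      simpa using h1
  have hz3 : Filter.Tendsto (fun n => t n / 2 - ρ / 2) Filter.atTop (nhds 0) := by
    have h1 := (htlim.div_const 2).sub_const (ρ/2)
    simpa using h1
  have hdecomp : ∀ n, Jv n = J n + ((c n) ^ 2 * (ρ / t n) - 1) * (1/2 * a n)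
      + ((ρ / t n) - 1) * f n + (t n / 2 - ρ / 2) := by
    intro n
    simp only [hJv_def, hJ_def]
    rw [hcNinv n]
    ring
  have hJvlim : Filter.Tendsto Jv Filter.atTop (nhds (m - ρ / 2 - Cb ^ 2 / (2 * ρ))) := by
    have h1 := ((hJlim.add hz1).add hz2).add hz3
    rw [show (m - Cb ^ 2/(2*ρ) - ρ/2 + 0 + 0 + 0) = m - ρ / 2 - Cb ^ 2 / (2 * ρ) from by ring]
      at h1
    exact Filter.Tendsto.congr (fun n => (hdecomp n).symm) h1
  have hub : sInf (JSet N F ρ) ≤ m - ρ / 2 - Cb ^ 2 / (2 * ρ) :=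
    ge_of_tendsto hJvlim (Filter.Eventually.of_forall fun n => csInf_le hbddJ (hmemJ n))
  have hlb : m - ρ / 2 - Cb ^ 2 / (2 * ρ) ≤ sInf (JSet N F ρ) :=
    le_csInf hJne (fun j hj => hlow j hj)
  linarith
end
end

section
/- Assume N ≥ 3 and that F satisfies (H0), (H2) and (H3). Let C̄ < 0, suppose M_{C̄} is nonempty and that inf{E(u,ω) : (u,ω) ∈ M_{C̄}} < |C̄|. Then there exists ρ > 0 such that inf{J(u) : u ∈ H¹(ℝᴺ,ℝ), u ≥ 0 a.e., ∫_{ℝᴺ} u² dx = ρ} < 0, where J(u) := ∫_{ℝᴺ} (½|∇u|² + F(u) − ½u²) dx. -/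
open MeasureTheory

noncomputable section

/-- If the infimum of the energy on `M_C̄` is strictly less
than `|C̄|`, then for some `ρ > 0` the infimum of `J` on the sphere `N_ρ` is
negative. -/
theorem inf_J_neg (N : ℕ) (hN : 3 ≤ N)
    (F : ℝ → ℝ) (hF : ContDiff ℝ 2 F) (h0 : H0 F) (h2 : H2 F) (h3 : H3 N F)
    (Cb : ℝ) (hCb : Cb < 0) (hne : (energySet N F Cb).Nonempty)
    (hlt : sInf (energySet N F Cb) < |Cb|) :
    ∃ ρ : ℝ, 0 < ρ ∧ sInf (JSet N F ρ) < 0 := by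
  classical
  -- A decomposition of the `J`-integral into its three pieces.
  have key : ∀ (u : EuclideanSpace ℝ (Fin N) → ℝ)
      (g : EuclideanSpace ℝ (Fin N) → EuclideanSpace ℝ (Fin N)),
      MemLp u 2 volume → MemLp g 2 volume →
      Integrable (fun x => F (u x)) volume →
      (∫ x, ((1:ℝ)/2 * ‖g x‖ ^ 2 + F (u x) - (1:ℝ)/2 * (u x) ^ 2))
        = (∫ x, (1:ℝ)/2 * ‖g x‖ ^ 2) + (∫ x, F (u x))
          - (1:ℝ)/2 * ∫ x, (u x) ^ 2 := by
    intro u g hu2 hg2 hFu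
    have husq : Integrable (fun x => (u x) ^ 2) volume := hu2.integrable_sq
    have hgsq : Integrable (fun x => ‖g x‖ ^ 2) volume :=
      (memLp_two_iff_integrable_sq_norm hg2.aestronglyMeasurable).mp hg2
    have hA : Integrable (fun x => (1:ℝ)/2 * ‖g x‖ ^ 2) volume := hgsq.const_mul _
    have hU : Integrable (fun x => (1:ℝ)/2 * (u x) ^ 2) volume := husq.const_mul _
    have h1 := integral_sub (hA.add hFu) hU
    simp only [Pi.add_apply] at h1
    rw [h1, integral_add hA hFu, integral_const_mul, integral_const_mul]
  -- Extract an element of the energy set with value `< |Cb|`.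
  obtain ⟨e, heS, helt⟩ : ∃ e ∈ energySet N F Cb, e < |Cb| := by
    by_contra h
    push_neg at h
    exact absurd (le_csInf hne h) (not_le.2 hlt)
  obtain ⟨u, g, ω, ⟨hu2, hwg, hg2, hupos, hFu, hω⟩, hch, heq⟩ := heS
  set ρ : ℝ := ∫ x, (u x) ^ 2 with hρ
  have husq : Integrable (fun x => (u x) ^ 2) volume := hu2.integrable_sq
  have hgsq : Integrable (fun x => ‖g x‖ ^ 2) volume :=
    (memLp_two_iff_integrable_sq_norm hg2.aestronglyMeasurable).mp hg2
  have habs : |Cb| = -Cb := abs_of_neg hCb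
  have hωρ : ω * ρ = -Cb := by
    have h1 : -ω * ρ = Cb := hch
    linarith
  have hρpos : 0 < ρ := by
    by_contra h
    push_neg at h
    have : ω * ρ ≤ 0 := mul_nonpos_of_nonneg_of_nonpos hω.le h
    linarith
  refine ⟨ρ, hρpos, ?_⟩
  -- Decompose the energy.
  have hA : Integrable (fun x => (1:ℝ)/2 * ‖g x‖ ^ 2) volume := hgsq.const_mul _
  have hM : Integrable (fun x => (1:ℝ)/2 * ω ^ 2 * (u x) ^ 2) volume :=
    husq.const_mul _
  have hedec : e = (∫ x, (1:ℝ)/2 * ‖g x‖ ^ 2) + (1:ℝ)/2 * ω ^ 2 * ρ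
      + (∫ x, F (u x)) := by
    rw [heq]
    unfold energy
    have h1 := integral_add (hA.add hM) hFu
    simp only [Pi.add_apply] at h1
    rw [h1, integral_add hA hM, integral_const_mul, integral_const_mul, hρ]
  set A : ℝ := ∫ x, (1:ℝ)/2 * ‖g x‖ ^ 2 with hAdef
  set B : ℝ := ∫ x, F (u x) with hBdef
  -- `u` itself is in the `J`-sphere, with value `A + B - ρ/2 < 0`.
  set j : ℝ := ∫ x, ((1:ℝ)/2 * ‖g x‖ ^ 2 + F (u x) - (1:ℝ)/2 * (u x) ^ 2)
    with hjdef
  have hjval : j = A + B - (1:ℝ)/2 * ρ := key u g hu2 hg2 hFu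
  have hjmem : j ∈ JSet N F ρ := ⟨u, g, hu2, hwg, hg2, hupos, hFu, rfl, rfl⟩
  have hjneg : j < 0 := by
    have h1 : e < ω * ρ := by rw [hωρ]; linarith [helt, habs]
    nlinarith [sq_nonneg (ω - 1), hρpos]
  -- `JSet N F ρ` is bounded below by `-ρ/2`.
  have hbdd : ∀ j' ∈ JSet N F ρ, -((1:ℝ)/2 * ρ) ≤ j' := by
    rintro j' ⟨u', g', hu2', hwg', hg2', hupos', hFu', hnorm', rfl⟩
    rw [key u' g' hu2' hg2' hFu', hnorm']
    have hA' : 0 ≤ ∫ x, (1:ℝ)/2 * ‖g' x‖ ^ 2 :=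
      integral_nonneg fun x => by positivity
    have hB' : 0 ≤ ∫ x, F (u' x) := by
      refine integral_nonneg_of_ae ?_
      filter_upwards [hupos'] with x hx using h2 _ hx
    linarith
  calc sInf (JSet N F ρ) ≤ j := csInf_le ⟨-((1:ℝ)/2 * ρ), hbdd⟩ hjmem
    _ < 0 := hjneg
end
end

section
/- Assume F is continuous with F(0) = 0, F(s) ≥ 0 for all s ≥ 0 (H2), and α₀ := inf_{s>0} F(s)/(s²/2) < 1 (H1). Then for every M > 0 there exist a nonzero, nonnegative, Lipschitz, compactly supported function u : ℝᴺ → ℝ and ω > 0 such that E(u,ω) < |C(u,ω)| (i.e. the energy-to-charge ratio Λ(u,ω) := E(u,ω)/|C(u,ω)| is < 1) and |C(u,ω)| ≥ M. -/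
/-!
Pick `s > 0` with `F s < s² / 2`, take `ω = 1` and let `u` equal `s` on the ball of radius `R`,
decaying linearly to `0` at radius `R + 1`. On the inner ball the energy density
`½u² + F u` falls short of the charge density `u²` by `s² / 2 - F s > 0`, while the shell
`R ≤ ‖x‖ ≤ R + 1`, where `|∇u| ≤ s`, costs only `O(R ^ (N - 1))`. Hence for large `R` the
energy is below the charge, and the charge, of order `R ^ N`, exceeds `M`.
-/

open MeasureTheory Metric Set Filter Topology Module

noncomputable section

lemma exists_lt_sq_div_two_of_sInf_lt_one {F : ℝ → ℝ} (h2 : ∀ s : ℝ, 0 ≤ s → 0 ≤ F s)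
    (h1 : sInf {r : ℝ | ∃ s : ℝ, 0 < s ∧ r = F s / (s ^ 2 / 2)} < 1) :
    ∃ s : ℝ, 0 < s ∧ F s < s ^ 2 / 2 := by
  have hbdd : BddBelow {r : ℝ | ∃ s : ℝ, 0 < s ∧ r = F s / (s ^ 2 / 2)} := by
    refine ⟨0, ?_⟩
    rintro _ ⟨s, hs, rfl⟩
    exact div_nonneg (h2 s hs.le) (by positivity)
  obtain ⟨_, ⟨s, hs, rfl⟩, hlt⟩ := (csInf_lt_iff hbdd ⟨_, 1, one_pos, rfl⟩).1 h1
  exact ⟨s, hs, (div_lt_one (by positivity)).1 hlt⟩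

lemma eventually_mul_add_one_pow_lt {B B' : ℝ} (hB : B < B') (n : ℕ) :
    ∀ᶠ R : ℝ in atTop, B * (R + 1) ^ n < B' * R ^ n := by
  have hlim : Tendsto (fun R : ℝ => B * (1 + R⁻¹) ^ n) atTop (𝓝 B) := by
    simpa using (((tendsto_const_nhds (x := 1)).add tendsto_inv_atTop_zero).pow n).const_mul B
  filter_upwards [hlim.eventually (gt_mem_nhds hB),
    eventually_gt_atTop 0] with R hlt hR
  calc B * (R + 1) ^ n = B * (1 + R⁻¹) ^ n * R ^ n := by
        rw [mul_assoc, ← mul_pow, add_mul, one_mul, inv_mul_cancel₀ hR.ne', add_comm]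
    _ < B' * R ^ n := mul_lt_mul_of_pos_right hlt (pow_pos hR n)

lemma measureReal_ball_pos {X : Type*} [PseudoMetricSpace X] [ProperSpace X] [MeasurableSpace X]
    (μ : Measure X) [μ.IsOpenPosMeasure] [IsFiniteMeasureOnCompacts μ] (x : X) {r : ℝ}
    (hr : 0 < r) : 0 < μ.real (ball x r) :=
  ENNReal.toReal_pos (measure_ball_pos μ x hr).ne' measure_ball_lt_top.ne

namespace MeasureTheory.Measure

variable {E : Type*} [NormedAddCommGroup E] [NormedSpace ℝ E] [FiniteDimensional ℝ E]
  [MeasurableSpace E] [BorelSpace E] (μ : Measure E) [IsAddHaarMeasure μ]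

theorem addHaar_real_ball_of_pos (x : E) {r : ℝ} (hr : 0 < r) :
    μ.real (ball x r) = r ^ finrank ℝ E * μ.real (ball 0 1) := by
  rw [measureReal_def, addHaar_ball_of_pos μ x hr, ENNReal.toReal_mul,
    ENNReal.toReal_ofReal (by positivity), measureReal_def]

end MeasureTheory.Measure

def plateau {E : Type*} [NormedAddCommGroup E] (s R : ℝ) (x : E) : ℝ :=
  s * min 1 (max 0 (R + 1 - ‖x‖))

section Plateau

variable {E : Type*} [NormedAddCommGroup E] {s R : ℝ} {x : E}

lemma plateau_nonneg (hs : 0 ≤ s) : 0 ≤ plateau s R x :=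
  mul_nonneg hs (le_min zero_le_one (le_max_left _ _))

lemma plateau_le (hs : 0 ≤ s) : plateau s R x ≤ s :=
  mul_le_of_le_one_right hs (min_le_left _ _)

lemma plateau_of_norm_le (hx : ‖x‖ ≤ R) : plateau s R x = s := by
  rw [plateau, max_eq_right (by linarith), min_eq_left (by linarith), mul_one]

lemma plateau_of_le_norm (hx : R + 1 ≤ ‖x‖) : plateau s R x = 0 := by
  rw [plateau, max_eq_left (by linarith), min_eq_right zero_le_one, mul_zero]

lemma lipschitzWith_plateau (s R : ℝ) : LipschitzWith ‖s‖₊ (plateau s R : E → ℝ) := by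
  have hramp : LipschitzWith 1 fun x : E => R + 1 - ‖x‖ :=
    LipschitzWith.of_le_add fun x y => by
      linarith [norm_sub_norm_le y x, norm_sub_rev y x, dist_eq_norm x y]
  rw [← mul_one ‖s‖₊]
  exact (lipschitzWith_smul s).comp ((hramp.const_max 0).const_min 1)

lemma hasCompactSupport_plateau [ProperSpace E] (s R : ℝ) :
    HasCompactSupport (plateau s R : E → ℝ) :=
  HasCompactSupport.intro (isCompact_closedBall 0 (R + 1)) fun x hx =>
    plateau_of_le_norm (by simpa using hx : R + 1 < ‖x‖).le

lemma plateau_eventuallyEq_of_norm_lt (hx : ‖x‖ < R) :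
    plateau s R =ᶠ[𝓝 x] fun _ => s := by
  filter_upwards [isOpen_ball.mem_nhds (mem_ball_zero_iff.2 hx)] with y hy
  exact plateau_of_norm_le (mem_ball_zero_iff.1 hy).le

lemma plateau_eventuallyEq_of_lt_norm (hx : R + 1 < ‖x‖) :
    plateau s R =ᶠ[𝓝 x] fun _ => 0 := by
  filter_upwards [(isOpen_lt continuous_const continuous_norm).mem_nhds hx] with y hy
  exact plateau_of_le_norm hy.le

end Plateau

section Gradient

variable {E : Type*} [NormedAddCommGroup E] [InnerProductSpace ℝ E] [CompleteSpace E]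

lemma norm_gradient_le_of_lipschitzWith {K : NNReal} {f : E → ℝ} (hf : LipschitzWith K f)
    (x : E) : ‖gradient f x‖ ≤ K := by
  rw [gradient, LinearIsometryEquiv.norm_map]
  exact norm_fderiv_le_of_lipschitz ℝ hf

lemma gradient_plateau_of_norm_lt {s R : ℝ} {x : E} (hx : ‖x‖ < R) :
    gradient (plateau s R) x = 0 := by
  rw [(plateau_eventuallyEq_of_norm_lt hx).gradient_eq, gradient_fun_const]

lemma gradient_plateau_of_lt_norm {s R : ℝ} {x : E} (hx : R + 1 < ‖x‖) :
    gradient (plateau s R) x = 0 := by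
  rw [(plateau_eventuallyEq_of_lt_norm hx).gradient_eq, gradient_fun_const]

lemma energy_density_plateau_le {F : ℝ → ℝ} {s : ℝ} (hs : 0 ≤ s) (hF0 : F 0 = 0) {C : ℝ}
    (hC : ∀ t ∈ Icc 0 s, F t ≤ C) (R : ℝ) (x : E) :
    1 / 2 * ‖gradient (plateau s R) x‖ ^ 2 + 1 / 2 * plateau s R x ^ 2 + F (plateau s R x) ≤
      plateau s R x ^ 2 + ((closedBall 0 (R + 1)).indicator (fun _ => s ^ 2 / 2 + C) x -
        (ball 0 R).indicator (fun _ => s ^ 2 + C - F s) x) := by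
  rcases lt_or_ge ‖x‖ R with hx | hx
  · rw [indicator_of_mem (mem_closedBall_zero_iff.2 (by linarith)),
      indicator_of_mem (mem_ball_zero_iff.2 hx),
      gradient_plateau_of_norm_lt hx, plateau_of_norm_le hx.le]
    simp only [norm_zero]
    linarith
  rcases le_or_gt ‖x‖ (R + 1) with hx' | hx'
  · rw [indicator_of_mem (by simpa using hx'), indicator_of_notMem (by simpa using hx)]
    have hgrad := norm_gradient_le_of_lipschitzWith (lipschitzWith_plateau s R) x
    rw [Real.nnnorm_of_nonneg hs] at hgrad
    have hgrad_sq : ‖gradient (plateau s R) x‖ ^ 2 ≤ s ^ 2 :=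
      pow_le_pow_left₀ (norm_nonneg _) hgrad 2
    have hF := hC _ ⟨plateau_nonneg (R := R) (x := x) hs, plateau_le hs⟩
    nlinarith [sq_nonneg (plateau s R x)]
  · rw [indicator_of_notMem (by simpa using hx'), indicator_of_notMem (by simpa using hx),
      gradient_plateau_of_lt_norm hx', plateau_of_le_norm hx'.le, hF0]
    simp

end Gradient

section Energy

variable {E : Type*} [NormedAddCommGroup E] [InnerProductSpace ℝ E] [FiniteDimensional ℝ E]
  [MeasurableSpace E] [BorelSpace E] (μ : Measure E) [μ.IsAddHaarMeasure]
  {F : ℝ → ℝ} {s : ℝ}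

lemma integrable_plateau_sq (s R : ℝ) : Integrable (fun x : E => plateau s R x ^ 2) μ := by
  have hsupp : HasCompactSupport fun x : E => plateau s R x ^ 2 :=
    (hasCompactSupport_plateau s R).comp_left (g := fun t : ℝ => t ^ 2) (zero_pow two_ne_zero)
  exact ((lipschitzWith_plateau s R).continuous.pow 2).integrable_of_hasCompactSupport hsupp

lemma integral_energy_plateau_le (h2 : ∀ t : ℝ, 0 ≤ t → 0 ≤ F t) (hs : 0 ≤ s) (hF0 : F 0 = 0)
    {C : ℝ} (hC : ∀ t ∈ Icc 0 s, F t ≤ C) {R : ℝ} (hR : 0 < R) :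
    ∫ x, (1 / 2 * ‖gradient (plateau s R) x‖ ^ 2 + 1 / 2 * plateau s R x ^ 2
        + F (plateau s R x)) ∂μ ≤
      ∫ x, plateau s R x ^ 2 ∂μ + ((s ^ 2 / 2 + C) * (R + 1) ^ finrank ℝ E -
        (s ^ 2 + C - F s) * R ^ finrank ℝ E) * μ.real (ball 0 1) := by
  have hint_closedBall : Integrable ((closedBall (0 : E) (R + 1)).indicator
      fun _ => s ^ 2 / 2 + C) μ :=
    (integrableOn_const measure_closedBall_lt_top.ne).integrable_indicator measurableSet_closedBall
  have hint_ball : Integrable ((ball (0 : E) R).indicator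
      fun _ => s ^ 2 + C - F s) μ :=
    (integrableOn_const measure_ball_lt_top.ne).integrable_indicator measurableSet_ball
  have hdensity_nonneg : ∀ x : E, 0 ≤ 1 / 2 * ‖gradient (plateau s R) x‖ ^ 2
      + 1 / 2 * plateau s R x ^ 2 + F (plateau s R x) := fun x => by
    have := h2 _ (plateau_nonneg (R := R) (x := x) hs)
    positivity
  -- bounding a nonnegative integrand needs no integrability of `‖∇u‖²`
  calc _ ≤ ∫ x, (plateau s R x ^ 2 + ((closedBall 0 (R + 1)).indicator
          (fun _ => s ^ 2 / 2 + C) x - (ball 0 R).indicator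
          (fun _ => s ^ 2 + C - F s) x)) ∂μ :=
        integral_mono_of_nonneg (Eventually.of_forall hdensity_nonneg)
          ((integrable_plateau_sq μ s R).add (hint_closedBall.sub hint_ball))
          (Eventually.of_forall (energy_density_plateau_le hs hF0 hC R))
    _ = _ := by
        have hsplit := integral_add (integrable_plateau_sq μ s R) (hint_closedBall.sub hint_ball)
        simp only [Pi.sub_apply] at hsplit
        rw [hsplit, integral_sub hint_closedBall hint_ball,
          integral_indicator_const _ measurableSet_closedBall,
          integral_indicator_const _ measurableSet_ball,
          Measure.addHaar_real_closedBall μ _ (by linarith),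
          Measure.addHaar_real_ball_of_pos μ _ hR, smul_eq_mul, smul_eq_mul]
        ring

lemma eventually_integral_energy_plateau_lt (hF : Continuous F) (hF0 : F 0 = 0)
    (h2 : ∀ t : ℝ, 0 ≤ t → 0 ≤ F t) (hs : 0 ≤ s) (hFs : F s < s ^ 2 / 2) :
    ∀ᶠ R in atTop, ∫ x, (1 / 2 * ‖gradient (plateau s R) x‖ ^ 2 + 1 / 2 * plateau s R x ^ 2
        + F (plateau s R x)) ∂μ < ∫ x, plateau s R x ^ 2 ∂μ := by
  obtain ⟨C, hC⟩ := isCompact_Icc.bddAbove_image (hF.continuousOn (s := Icc 0 s))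
  have hc := measureReal_ball_pos μ (0 : E) one_pos
  filter_upwards [eventually_gt_atTop 0, eventually_mul_add_one_pow_lt
    (show s ^ 2 / 2 + C < s ^ 2 + C - F s by linarith) (finrank ℝ E)] with R hR hlt
  refine (integral_energy_plateau_le μ h2 hs hF0 (fun t ht => hC ⟨t, ht, rfl⟩) hR).trans_lt ?_
  exact add_lt_of_neg_right _ (mul_neg_of_neg_of_pos (sub_neg.2 hlt) hc)

lemma tendsto_integral_plateau_sq_atTop (hs : s ≠ 0) (hn : finrank ℝ E ≠ 0) :
    Tendsto (fun R => ∫ x, plateau s R x ^ 2 ∂μ) atTop atTop := by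
  have hc := measureReal_ball_pos μ (0 : E) one_pos
  refine tendsto_atTop_mono' _ ?_
    ((tendsto_pow_atTop hn).const_mul_atTop (mul_pos (sq_pos_of_ne_zero hs) hc))
  filter_upwards [eventually_gt_atTop 0] with R hR
  calc s ^ 2 * μ.real (ball 0 1) * R ^ finrank ℝ E
      = ∫ x, (ball (0 : E) R).indicator (fun _ => s ^ 2) x ∂μ := by
        rw [integral_indicator_const _ measurableSet_ball, Measure.addHaar_real_ball_of_pos μ _ hR,
          smul_eq_mul]
        ring
    _ ≤ ∫ x, plateau s R x ^ 2 ∂μ := by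
        refine integral_mono
          ((integrableOn_const measure_ball_lt_top.ne).integrable_indicator measurableSet_ball)
          (integrable_plateau_sq μ s R) fun x => ?_
        by_cases hx : x ∈ ball (0 : E) R
        · rw [indicator_of_mem hx, plateau_of_norm_le (mem_ball_zero_iff.1 hx).le]
        · rw [indicator_of_notMem hx]
          positivity

end Energy

/-- Under (H1) and (H2), for every `M > 0` there is a
nonzero, nonnegative, Lipschitz, compactly supported `u` and `ω > 0` with
energy-to-charge ratio `Λ(u,ω) = E(u,ω)/|C(u,ω)| < 1` and `|C(u,ω)| ≥ M`. -/
theorem exists_ratio_lt_one_large_charge (N : ℕ) (hN : 2 ≤ N)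
    (F : ℝ → ℝ) (hF : Continuous F) (hF0 : F 0 = 0)
    (h2 : ∀ s : ℝ, 0 ≤ s → 0 ≤ F s)
    (h1 : sInf {r : ℝ | ∃ s : ℝ, 0 < s ∧ r = F s / (s ^ 2 / 2)} < 1) :
    ∀ M : ℝ, 0 < M →
      ∃ (u : EuclideanSpace ℝ (Fin N) → ℝ) (ω : ℝ),
        u ≠ (fun _ => (0:ℝ)) ∧ (∀ x, 0 ≤ u x) ∧
        (∃ K : NNReal, LipschitzWith K u) ∧ HasCompactSupport u ∧
        0 < ω ∧
        (∫ x, ((1:ℝ)/2 * ‖gradient u x‖ ^ 2 + (1:ℝ)/2 * ω ^ 2 * (u x) ^ 2 + F (u x))) <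
          |(-ω * ∫ x, (u x) ^ 2)| ∧
        M ≤ |(-ω * ∫ x, (u x) ^ 2)| := by
  intro M hM
  obtain ⟨s, hs, hFs⟩ := exists_lt_sq_div_two_of_sInf_lt_one h2 h1
  have hdim : finrank ℝ (EuclideanSpace ℝ (Fin N)) ≠ 0 := by
    rw [finrank_euclideanSpace_fin]; omega
  obtain ⟨R, henergy, hcharge⟩ :=
    ((eventually_integral_energy_plateau_lt (E := EuclideanSpace ℝ (Fin N)) volume
      hF hF0 h2 hs.le hFs).and
      ((tendsto_integral_plateau_sq_atTop volume hs.ne' hdim).eventually_ge_atTop M)).exists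
  set u : EuclideanSpace ℝ (Fin N) → ℝ := plateau s R
  have hcharge_abs : |(-1 * ∫ x, u x ^ 2)| = ∫ x, u x ^ 2 := by
    rw [neg_one_mul, abs_neg, abs_of_nonneg (hM.le.trans hcharge)]
  refine ⟨u, 1, fun h => ?_, fun x => plateau_nonneg hs.le,
    ⟨_, lipschitzWith_plateau s R⟩, hasCompactSupport_plateau s R, one_pos, ?_, ?_⟩
  · exact hM.not_ge (by simpa [h] using hcharge)
  · simpa only [one_pow, mul_one, hcharge_abs] using henergy
  · rwa [hcharge_abs]
end
end
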